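/- arXiv:math/0304421 — 11 statements merged into one kernel-verified Lean document; each statement's English description precedes it below -/
import Mathlib

section
/- Let n ≥ 1, 1 ≤ k ≤ n, and let A := {z ∈ 𝔻ⁿ : z_1⋯z_k = 0}, where 𝔻 is the open unit disc in ℂ. Then for every z ∈ 𝔻ⁿ, the generalized Möbius function satisfies m_{𝔻ⁿ}(A, z) = |z_1|·…·|z_k|. -/
open Finset

/-- The generalized Möbius function of `A ⊆ G` at `z`. -/
noncomputable def mob {n : ℕ} (G A : Set (Fin n → ℂ)) (z : Fin n → ℂ) : ℝ :=
  sSup {x : ℝ | ∃ f : (Fin n → ℂ) → ℂ, DifferentiableOn ℂ f G ∧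
    (∀ w ∈ G, ‖f w‖ < 1) ∧ (∀ w ∈ A, f w = 0) ∧ x = ‖f z‖}

/-!
The polydisc `𝔻ⁿ` is the unit ball of the sup norm. The upper bound comes from the Schwarz lemma
applied one coordinate at a time: if `f` vanishes wherever some `w j` with `j ∈ S` vanishes, then
freezing all coordinates but `i ∈ S` gives a function of one variable vanishing at `0` and bounded,
by induction, by the product over `S \ {i}`, so it gains the factor `‖z i‖`. The bound is approached
by the admissible functions `w ↦ r ∏_{j ∈ S} w j`, `0 < r < 1`.
-/

open Metric Set Filter Topology

section Polydisc

variable {ι : Type*} [Fintype ι]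

lemma prod_norm_le_one_of_mem_ball {w : ι → ℂ} (hw : w ∈ ball 0 1) (S : Finset ι) :
    ∏ j ∈ S, ‖w j‖ ≤ 1 :=
  prod_le_one (fun _ _ => norm_nonneg _)
    fun j _ => ((norm_le_pi_norm w j).trans_lt (mem_ball_zero_iff.mp hw)).le

variable [DecidableEq ι]

lemma update_mem_ball_zero_one {z : ι → ℂ} (hz : z ∈ ball 0 1) (i : ι) {ζ : ℂ} (hζ : ‖ζ‖ < 1) :
    Function.update z i ζ ∈ ball 0 1 := by
  rw [mem_ball_zero_iff, pi_norm_lt_iff one_pos] at hz ⊢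
  intro j
  rcases eq_or_ne j i with rfl | hji
  · simpa using hζ
  · simpa [hji] using hz j

theorem norm_le_prod_norm_of_eq_zero_of_coord_eq_zero (S : Finset ι) {f : (ι → ℂ) → ℂ}
    (hd : DifferentiableOn ℂ f (ball 0 1)) (hb : ∀ w ∈ ball 0 1, ‖f w‖ ≤ 1)
    (h0 : ∀ w ∈ ball 0 1, (∃ j ∈ S, w j = 0) → f w = 0) {z : ι → ℂ} (hz : z ∈ ball 0 1) :
    ‖f z‖ ≤ ∏ j ∈ S, ‖z j‖ := by
  induction S using Finset.induction_on generalizing z with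
  | empty => simpa using hb z hz
  | @insert i s hi ih =>
    set g : ℂ → ℂ := fun ζ => f (Function.update z i ζ)
    have hgd : DifferentiableOn ℂ g (ball 0 1) :=
      hd.comp (fun ζ _ => (hasFDerivAt_update z ζ).differentiableAt.differentiableWithinAt)
        fun ζ hζ => update_mem_ball_zero_one hz i (mem_ball_zero_iff.mp hζ)
    have hg0 : g 0 = 0 :=
      h0 _ (update_mem_ball_zero_one hz i (by simp)) ⟨i, mem_insert_self i s, by simp⟩
    have hgb : MapsTo g (ball 0 1) (closedBall (g 0) (∏ j ∈ s, ‖z j‖)) := by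
      intro ζ hζ
      have hupd := update_mem_ball_zero_one hz i (mem_ball_zero_iff.mp hζ)
      have := ih (fun w hw ⟨j, hj, hwj⟩ => h0 w hw ⟨j, mem_insert_of_mem hj, hwj⟩) hupd
      rw [prod_congr rfl fun j hj => by rw [Function.update_of_ne (ne_of_mem_of_not_mem hj hi)]]
        at this
      simpa [hg0] using this
    have hzi : z i ∈ ball (0 : ℂ) 1 :=
      mem_ball_zero_iff.mpr ((norm_le_pi_norm z i).trans_lt (mem_ball_zero_iff.mp hz))
    have hschwarz := Complex.dist_le_div_mul_dist_of_mapsTo_ball hgd hgb hzi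
    simp only [g, Function.update_eq_self, hg0, dist_zero_right, div_one] at hschwarz
    rw [prod_insert hi, mul_comm]
    exact hschwarz

end Polydisc

theorem mob_ball_setOf_prod_eq_zero {n : ℕ} (S : Finset (Fin n)) {z : Fin n → ℂ}
    (hz : z ∈ ball 0 1) :
    mob (ball 0 1) {w ∈ ball 0 1 | ∏ j ∈ S, w j = 0} z = ∏ j ∈ S, ‖z j‖ := by
  have hlim : Tendsto (fun r : ℝ => r * ∏ j ∈ S, ‖z j‖) (𝓝[<] 1) (𝓝 (∏ j ∈ S, ‖z j‖)) := by
    simpa using ((continuous_mul_const (∏ j ∈ S, ‖z j‖)).tendsto 1).mono_left nhdsWithin_le_nhds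
  rw [mob]
  refine IsLUB.csSup_eq ⟨?_, fun b hb => ?_⟩
    ⟨0, 0, differentiableOn_const 0, by simp, by simp, by simp⟩
  · rintro _ ⟨f, hd, hb, h0, rfl⟩
    exact norm_le_prod_norm_of_eq_zero_of_coord_eq_zero S hd (fun w hw => (hb w hw).le)
      (fun w hw ⟨j, hj, hwj⟩ => h0 w ⟨hw, prod_eq_zero hj hwj⟩) hz
  · refine le_of_tendsto hlim (eventually_of_mem (Ioo_mem_nhdsLT one_pos) fun r ⟨hr0, hr1⟩ => hb
      ⟨fun w => r * ∏ j ∈ S, w j, by fun_prop, fun w hw => ?_, fun w hw => by simp [hw.2],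
        by simp [norm_prod, abs_of_pos hr0]⟩)
    calc ‖(r : ℂ) * ∏ j ∈ S, w j‖ = r * ∏ j ∈ S, ‖w j‖ := by simp [norm_prod, abs_of_pos hr0]
      _ < 1 := (mul_le_of_le_one_right hr0.le (prod_norm_le_one_of_mem_ball hw S)).trans_lt hr1

theorem stmt0_general (n k : ℕ)
    (G A : Set (Fin n → ℂ))
    (hG : G = {z | ∀ j, ‖z j‖ < 1})
    (hA : A = {z ∈ G | ∏ j ∈ univ.filter (fun j : Fin n => (j : ℕ) < k), z j = 0})
    (z : Fin n → ℂ) (hz : z ∈ G) :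
    mob G A z = ∏ j ∈ univ.filter (fun j : Fin n => (j : ℕ) < k), ‖z j‖ := by
  have hG_ball : G = ball 0 1 := by
    ext w
    simp [hG, pi_norm_lt_iff one_pos]
  subst hA hG_ball
  exact mob_ball_setOf_prod_eq_zero _ hz

/-- For the unit polydisc `𝔻ⁿ` and `A = {z ∈ 𝔻ⁿ : z_1⋯z_k = 0}`,
`m_{𝔻ⁿ}(A, z) = |z_1|⋯|z_k|`. -/
theorem stmt0 (n k : ℕ) (hn : 1 ≤ n) (hk1 : 1 ≤ k) (hkn : k ≤ n)
    (G A : Set (Fin n → ℂ))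
    (hG : G = {z | ∀ j, ‖z j‖ < 1})
    (hA : A = {z ∈ G | ∏ j ∈ univ.filter (fun j : Fin n => (j : ℕ) < k), z j = 0})
    (z : Fin n → ℂ) (hz : z ∈ G) :
    mob G A z = ∏ j ∈ univ.filter (fun j : Fin n => (j : ℕ) < k), ‖z j‖ :=
  stmt0_general n k G A hG hA z hz
end

section
/- Let n ≥ 2, p_1,…,p_n > 0, 1 ≤ k ≤ n, and let z ∈ 𝔼 be such that (p_j|z_j|^{2p_j})_{j=1}^k is monotonically increasing. Then for every holomorphic f : 𝔼 → ℂ with |f| < 1 on 𝔼 and f ≡ 0 on A, one has |f(z)| ≤ R(z); consequently m_𝔼(A,z) ≤ R(z). -/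
/-!
Put `c := c_d(z)` and `ρ_j := (c / (2 p_j))^(1/(2 p_j))`, so that `∑_{j ≤ d} ρ_j^(2 p_j) = c q_d
= r_d(z)`. Hence, for `0 < t < 1`, the polydisc `|w_j| < ρ_j` (`j ≤ d`) with the remaining
coordinates frozen at those of `t z` lies in `𝔼`. As `p_j |z_j|^(2 p_j)` increases and
`2 p_d |z_d|^(2 p_d) ≤ c`, we have `|z_j| ≤ ρ_j` for `j ≤ d`, so `t z` lies in this polydisc.
A competitor vanishes where some `w_j` with `j ≤ d ≤ k` vanishes, so the one-variable Schwarz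
lemma, applied in each of these coordinates in turn, gives
`|f(t z)| ≤ ∏_{j ≤ d} t |z_j| / ρ_j ≤ R(z)`; let `t → 1`.
-/

open Finset

noncomputable def ellipsoid {n : ℕ} (p : Fin n → ℝ) : Set (Fin n → ℂ) :=
  {z | ∑ j, ‖z j‖ ^ (2 * p j) < 1}

def zeroSet {n : ℕ} (p : Fin n → ℝ) (k : ℕ) : Set (Fin n → ℂ) :=
  {z ∈ ellipsoid p | ∏ j ∈ univ.filter (fun j : Fin n => (j : ℕ) < k), z j = 0}

noncomputable def qq {n : ℕ} (p : Fin n → ℝ) (s : ℕ) : ℝ :=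
  ∑ j ∈ univ.filter (fun j : Fin n => (j : ℕ) < s), (2 * p j)⁻¹

noncomputable def rr {n : ℕ} (p : Fin n → ℝ) (z : Fin n → ℂ) (s : ℕ) : ℝ :=
  1 - ∑ j ∈ univ.filter (fun j : Fin n => s ≤ (j : ℕ)), ‖z j‖ ^ (2 * p j)

noncomputable def cc {n : ℕ} (p : Fin n → ℝ) (z : Fin n → ℂ) (s : ℕ) : ℝ :=
  rr p z s / qq p s

noncomputable def dd {n : ℕ} (p : Fin n → ℝ) (z : Fin n → ℂ) (k : ℕ) : ℕ :=
  sSup {s : ℕ | 1 ≤ s ∧ s ≤ k ∧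
    ∀ hs : s - 1 < n,
      2 * p ⟨s - 1, hs⟩ * ‖z ⟨s - 1, hs⟩‖ ^ (2 * p ⟨s - 1, hs⟩) ≤ cc p z s}

noncomputable def RR {n : ℕ} (p : Fin n → ℝ) (z : Fin n → ℂ) (k : ℕ) : ℝ :=
  ∏ j ∈ univ.filter (fun j : Fin n => (j : ℕ) < dd p z k),
    ‖z j‖ * (2 * p j / cc p z (dd p z k)) ^ (2 * p j)⁻¹

def monIncr {n : ℕ} (p : Fin n → ℝ) (z : Fin n → ℂ) (k : ℕ) : Prop :=
  ∀ i j : Fin n, (j : ℕ) < k → i ≤ j →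
    p i * ‖z i‖ ^ (2 * p i) ≤ p j * ‖z j‖ ^ (2 * p j)

noncomputable def pshift {n : ℕ} (p : Fin n → ℝ) (D : ℕ) (j : Fin (n - D)) : ℝ :=
  if h : D + (j : ℕ) < n then p ⟨D + (j : ℕ), h⟩ else 0

noncomputable def zrest {n : ℕ} (z : Fin n → ℂ) (D : ℕ) (j : Fin (n - D)) : ℂ :=
  if h : D + (j : ℕ) < n then z ⟨D + (j : ℕ), h⟩ else 0

noncomputable def rrest {n : ℕ} (p : Fin n → ℝ) (D : ℕ) (ζ : Fin (n - D) → ℂ) : ℝ :=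
  1 - ∑ j, ‖ζ j‖ ^ (2 * pshift p D j)

open Set Metric Filter Topology

def polydiscSlice {ι : Type*} (s : Finset ι) (ρ : ι → ℝ) (y : ι → ℂ) : Set (ι → ℂ) :=
  {w | (∀ j ∈ s, ‖w j‖ < ρ j) ∧ ∀ j ∉ s, w j = y j}

theorem norm_le_prod_div_of_polydiscSlice {ι : Type*} [Fintype ι] [DecidableEq ι] (s : Finset ι)
    (ρ : ι → ℝ) {f : (ι → ℂ) → ℂ} {y : ι → ℂ}
    (hf : DifferentiableOn ℂ f (polydiscSlice s ρ y))
    (hf_le : ∀ w ∈ polydiscSlice s ρ y, ‖f w‖ ≤ 1)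
    (hf_zero : ∀ w ∈ polydiscSlice s ρ y, (∃ j ∈ s, w j = 0) → f w = 0)
    (hy : ∀ j ∈ s, ‖y j‖ < ρ j) :
    ‖f y‖ ≤ ∏ j ∈ s, ‖y j‖ / ρ j := by
  induction s using Finset.induction_on generalizing y with
  | empty => simpa using hf_le y ⟨by simp, fun _ _ => rfl⟩
  | insert i s hi ih =>
    have hyi : ‖y i‖ < ρ i := hy i (mem_insert_self i s)
    have hslice_sub : ∀ u ∈ ball (0 : ℂ) (ρ i),
        polydiscSlice s ρ (Function.update y i u) ⊆ polydiscSlice (insert i s) ρ y := by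
      intro u hu w ⟨hws, hwy⟩
      refine ⟨(Finset.forall_mem_insert _ _ _).2 ⟨?_, hws⟩, fun j hj => ?_⟩
      · simpa [hwy i hi] using hu
      · rw [Finset.mem_insert, not_or] at hj
        rw [hwy j hj.2, Function.update_of_ne hj.1]
    have hy_update : ∀ u, ∀ j ∈ s, ‖Function.update y i u j‖ < ρ j := fun u j hj => by
      simpa [Function.update_of_ne (ne_of_mem_of_not_mem hj hi)] using hy j (mem_insert_of_mem hj)
    have hupdate_mem : MapsTo (Function.update y i) (ball 0 (ρ i))
        (polydiscSlice (insert i s) ρ y) := fun u hu =>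
      hslice_sub u hu ⟨hy_update u, fun _ _ => rfl⟩
    have hg_diff : DifferentiableOn ℂ (fun u => f (Function.update y i u)) (ball 0 (ρ i)) :=
      hf.comp (fun u _ => (hasFDerivAt_update (𝕜 := ℂ) y u).differentiableAt.differentiableWithinAt)
        hupdate_mem
    have hg_zero : f (Function.update y i 0) = 0 :=
      hf_zero _ (hupdate_mem (mem_ball_self ((norm_nonneg _).trans_lt hyi)))
        ⟨i, mem_insert_self i s, Function.update_self ..⟩
    have hg_le : MapsTo (fun u => f (Function.update y i u)) (ball 0 (ρ i))
        (closedBall (f (Function.update y i 0)) (∏ j ∈ s, ‖y j‖ / ρ j)) := by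
      intro u hu
      rw [hg_zero, mem_closedBall_zero_iff]
      calc ‖f (Function.update y i u)‖ ≤ ∏ j ∈ s, ‖Function.update y i u j‖ / ρ j :=
            ih (hf.mono (hslice_sub u hu)) (fun w hw => hf_le w (hslice_sub u hu hw))
              (fun w hw ⟨j, hj, hwj⟩ =>
                hf_zero w (hslice_sub u hu hw) ⟨j, mem_insert_of_mem hj, hwj⟩)
              (hy_update u)
        _ = ∏ j ∈ s, ‖y j‖ / ρ j := prod_congr rfl fun j hj => by
              rw [Function.update_of_ne (ne_of_mem_of_not_mem hj hi)]
    have := Complex.dist_le_div_mul_dist_of_mapsTo_ball hg_diff hg_le (mem_ball_zero_iff.2 hyi)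
    simp only [Function.update_eq_self, hg_zero, dist_zero_right] at this
    rw [prod_insert hi]
    exact this.trans_eq (by ring)

theorem norm_le_of_forall_smul_le {E F : Type*} [NormedAddCommGroup E] [NormedSpace ℝ E]
    [NormedAddCommGroup F] {f : E → F} {z : E} {M : ℝ} (hf : ContinuousAt f z)
    (h : ∀ t ∈ Ioo (0 : ℝ) 1, ‖f (t • z)‖ ≤ M) : ‖f z‖ ≤ M := by
  have hsmul : Tendsto (fun t : ℝ => t • z) (𝓝[<] 1) (𝓝 z) :=
    ((continuous_id.smul continuous_const).tendsto' 1 z (one_smul ℝ z)).mono_left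
      nhdsWithin_le_nhds
  refine le_of_tendsto ((continuous_norm.tendsto _).comp (hf.tendsto.comp hsmul)) ?_
  filter_upwards [Ioo_mem_nhdsLT (zero_lt_one' ℝ)] with t ht using h t ht

theorem mob_le_of_forall_norm_le {n : ℕ} {G A : Set (Fin n → ℂ)} {z : Fin n → ℂ} {M : ℝ}
    (h : ∀ f : (Fin n → ℂ) → ℂ, DifferentiableOn ℂ f G → (∀ w ∈ G, ‖f w‖ < 1) →
      (∀ w ∈ A, f w = 0) → ‖f z‖ ≤ M) :
    mob G A z ≤ M := by
  refine Real.sSup_le ?_ ?_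
  · rintro _ ⟨f, hfd, hf_lt, hf_zero, rfl⟩
    exact h f hfd hf_lt hf_zero
  · simpa using h 0 (differentiableOn_const 0) (by simp) (by simp)

theorem isOpen_ellipsoid {n : ℕ} {p : Fin n → ℝ} (hp : ∀ j, 0 ≤ p j) : IsOpen (ellipsoid p) :=
  isOpen_lt (continuous_finsetSum _ fun j _ =>
    ((continuous_apply j).norm.rpow_const fun _ => Or.inr (by linarith [hp j])))
    continuous_const

noncomputable def ellipsoidRadius {n : ℕ} (p : Fin n → ℝ) (c : ℝ) (j : Fin n) : ℝ :=
  (c / (2 * p j)) ^ (2 * p j)⁻¹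

section
variable {n : ℕ} {p : Fin n → ℝ}

theorem ellipsoidRadius_rpow {c : ℝ} (hc : 0 ≤ c) {j : Fin n} (hpj : 0 < p j) :
    ellipsoidRadius p c j ^ (2 * p j) = c / (2 * p j) := by
  rw [ellipsoidRadius, ← Real.rpow_mul (by positivity), inv_mul_cancel₀ (by positivity),
    Real.rpow_one]

theorem ellipsoidRadius_nonneg {c : ℝ} (hc : 0 ≤ c) {j : Fin n} (hpj : 0 ≤ p j) :
    0 ≤ ellipsoidRadius p c j := by
  unfold ellipsoidRadius; positivity

theorem ellipsoidRadius_pos {c : ℝ} (hc : 0 < c) {j : Fin n} (hpj : 0 < p j) :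
    0 < ellipsoidRadius p c j := by
  unfold ellipsoidRadius; positivity

theorem le_ellipsoidRadius {a c : ℝ} (ha : 0 ≤ a) {j : Fin n} (hpj : 0 < p j)
    (h : 2 * p j * a ^ (2 * p j) ≤ c) : a ≤ ellipsoidRadius p c j := by
  have hc : 0 ≤ c := le_trans (by positivity) h
  rw [← Real.rpow_le_rpow_iff ha (ellipsoidRadius_nonneg hc hpj.le) (by positivity : 0 < 2 * p j),
    ellipsoidRadius_rpow hc hpj, le_div_iff₀ (by positivity), mul_comm]
  exact h

theorem sum_ellipsoidRadius_rpow {c : ℝ} (hc : 0 ≤ c) (hp : ∀ j, 0 < p j) (s : ℕ) :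
    ∑ j ∈ univ.filter (fun j : Fin n => (j : ℕ) < s), ellipsoidRadius p c j ^ (2 * p j)
      = c * qq p s := by
  rw [qq, mul_sum]
  exact sum_congr rfl fun j _ => by rw [ellipsoidRadius_rpow hc (hp j), div_eq_mul_inv]

theorem sum_filter_lt_add_sum_filter_le (F : Fin n → ℝ) (s : ℕ) :
    ∑ j ∈ univ.filter (fun j : Fin n => (j : ℕ) < s), F j
      + ∑ j ∈ univ.filter (fun j : Fin n => s ≤ (j : ℕ)), F j = ∑ j, F j := by
  simp_rw [← not_lt]
  exact sum_filter_add_sum_filter_not _ _ _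

theorem sum_rpow_lt_rr {z : Fin n → ℂ} (hz : z ∈ ellipsoid p) (s : ℕ) :
    ∑ j ∈ univ.filter (fun j : Fin n => (j : ℕ) < s), ‖z j‖ ^ (2 * p j) < rr p z s := by
  have := sum_filter_lt_add_sum_filter_le (fun j => ‖z j‖ ^ (2 * p j)) s
  have hz' : ∑ j, ‖z j‖ ^ (2 * p j) < 1 := hz
  rw [rr]
  linarith

theorem qq_pos (hp : ∀ j, 0 < p j) {s : ℕ} (hs : 0 < s) (hn : 0 < n) : 0 < qq p s :=
  sum_pos (fun j _ => by have := hp j; positivity) ⟨⟨0, hn⟩, by simpa using hs⟩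

theorem dd_spec (hp : ∀ j, 0 < p j) {z : Fin n → ℂ} (hz : z ∈ ellipsoid p) {k : ℕ}
    (hk : 1 ≤ k) : 1 ≤ dd p z k ∧ dd p z k ≤ k ∧ ∀ hs : dd p z k - 1 < n,
      2 * p ⟨dd p z k - 1, hs⟩ * ‖z ⟨dd p z k - 1, hs⟩‖ ^ (2 * p ⟨dd p z k - 1, hs⟩)
        ≤ cc p z (dd p z k) := by
  refine (Nat.sSup_mem ⟨1, le_rfl, hk, fun hn => ?_⟩ ⟨k, fun s hs => hs.2.1⟩ : dd p z k ∈ _)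
  have h0 : univ.filter (fun j : Fin n => (j : ℕ) < 1) = {⟨0, hn⟩} := by
    ext j; simp [Fin.ext_iff]
  have hlt := sum_rpow_lt_rr hz 1
  have hp0 := hp ⟨0, hn⟩
  rw [h0, sum_singleton] at hlt
  rw [cc, qq, h0, sum_singleton, div_inv_eq_mul]
  nlinarith

theorem cc_pos (hp : ∀ j, 0 < p j) {z : Fin n → ℂ} (hz : z ∈ ellipsoid p) {s : ℕ} (hs : 0 < s)
    (hn : 0 < n) : 0 < cc p z s :=
  div_pos ((sum_nonneg fun j _ => by positivity).trans_lt (sum_rpow_lt_rr hz s)) (qq_pos hp hs hn)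

theorem polydiscSlice_subset_ellipsoid (hp : ∀ j, 0 < p j) {s : Finset (Fin n)} (hs : s.Nonempty)
    {ρ : Fin n → ℝ} {y : Fin n → ℂ}
    (h : ∑ j ∈ s, ρ j ^ (2 * p j) + ∑ j ∈ sᶜ, ‖y j‖ ^ (2 * p j) ≤ 1) :
    polydiscSlice s ρ y ⊆ ellipsoid p := by
  rintro w ⟨hws, hwy⟩
  have hlt : ∑ j ∈ s, ‖w j‖ ^ (2 * p j) < ∑ j ∈ s, ρ j ^ (2 * p j) :=
    sum_lt_sum_of_nonempty hs fun j hj =>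
      Real.rpow_lt_rpow (norm_nonneg _) (hws j hj) (by linarith [hp j])
  have heq : ∑ j ∈ sᶜ, ‖w j‖ ^ (2 * p j) = ∑ j ∈ sᶜ, ‖y j‖ ^ (2 * p j) :=
    sum_congr rfl fun j hj => by rw [hwy j (mem_compl.1 hj)]
  show ∑ j, ‖w j‖ ^ (2 * p j) < 1
  rw [← sum_add_sum_compl s]
  linarith

theorem polydiscSlice_cc_subset_ellipsoid (hp : ∀ j, 0 < p j) {z : Fin n → ℂ}
    (hz : z ∈ ellipsoid p) {s : ℕ} (hs : 0 < s) (hn : 0 < n) {y : Fin n → ℂ}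
    (hy : ∀ j, ‖y j‖ ≤ ‖z j‖) :
    polydiscSlice (univ.filter fun j : Fin n => (j : ℕ) < s)
      (ellipsoidRadius p (cc p z s)) y ⊆ ellipsoid p := by
  refine polydiscSlice_subset_ellipsoid hp ⟨⟨0, hn⟩, by simpa using hs⟩ ?_
  rw [sum_ellipsoidRadius_rpow (cc_pos hp hz hs hn).le hp, cc,
    div_mul_cancel₀ _ (qq_pos hp hs hn).ne', rr, compl_filter]
  simp_rw [not_lt]
  have : ∑ j ∈ univ.filter (fun j : Fin n => s ≤ (j : ℕ)), ‖y j‖ ^ (2 * p j)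
      ≤ ∑ j ∈ univ.filter (fun j : Fin n => s ≤ (j : ℕ)), ‖z j‖ ^ (2 * p j) :=
    sum_le_sum fun j _ => Real.rpow_le_rpow (norm_nonneg _) (hy j) (by linarith [hp j])
  linarith

theorem norm_le_ellipsoidRadius_of_lt_dd (hp : ∀ j, 0 < p j) {z : Fin n → ℂ}
    (hz : z ∈ ellipsoid p) {k : ℕ} (hk : 1 ≤ k) (hkn : k ≤ n) (hmon : monIncr p z k)
    {j : Fin n} (hj : (j : ℕ) < dd p z k) :
    ‖z j‖ ≤ ellipsoidRadius p (cc p z (dd p z k)) j := by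
  obtain ⟨hD1, hDk, hDcond⟩ := dd_spec hp hz hk
  have hDn : dd p z k - 1 < n := by omega
  have hmono := hmon j ⟨dd p z k - 1, hDn⟩ (by simp; omega) (Fin.le_def.2 (by simp; omega))
  exact le_ellipsoidRadius (norm_nonneg _) (hp j) (by linarith [hDcond hDn])

theorem RR_eq_prod_div_ellipsoidRadius (hp : ∀ j, 0 < p j) {z : Fin n → ℂ} {k : ℕ}
    (hc : 0 ≤ cc p z (dd p z k)) :
    RR p z k = ∏ j ∈ univ.filter (fun j : Fin n => (j : ℕ) < dd p z k),
      ‖z j‖ / ellipsoidRadius p (cc p z (dd p z k)) j := by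
  refine prod_congr rfl fun j _ => ?_
  have := hp j
  rw [ellipsoidRadius, div_eq_mul_inv ‖z j‖, ← Real.inv_rpow (by positivity), inv_div]

theorem norm_apply_smul_le_RR (hp : ∀ j, 0 < p j) {z : Fin n → ℂ} (hz : z ∈ ellipsoid p)
    {k : ℕ} (hk : 1 ≤ k) (hkn : k ≤ n) (hmon : monIncr p z k) {f : (Fin n → ℂ) → ℂ}
    (hfd : DifferentiableOn ℂ f (ellipsoid p)) (hf_lt : ∀ w ∈ ellipsoid p, ‖f w‖ < 1)
    (hf_zero : ∀ w ∈ zeroSet p k, f w = 0) {t : ℝ} (ht : t ∈ Ioo (0 : ℝ) 1) :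
    ‖f (t • z)‖ ≤ RR p z k := by
  set D := dd p z k
  set s := univ.filter fun j : Fin n => (j : ℕ) < D
  set ρ := ellipsoidRadius p (cc p z D)
  obtain ⟨hD, hDk, -⟩ := dd_spec hp hz hk
  have hn : 0 < n := by omega
  have hρ : ∀ j, 0 < ρ j := fun j => ellipsoidRadius_pos (cc_pos hp hz hD hn) (hp j)
  have hz_le : ∀ j ∈ s, ‖z j‖ ≤ ρ j := fun j hj =>
    norm_le_ellipsoidRadius_of_lt_dd hp hz hk hkn hmon (mem_filter.1 hj).2
  have hnorm : ∀ j, ‖(t • z) j‖ = t * ‖z j‖ := fun j => by simp [abs_of_pos ht.1]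
  have hscaled_le : ∀ j, ‖(t • z) j‖ ≤ ‖z j‖ := fun j => by
    rw [hnorm]; exact mul_le_of_le_one_left (norm_nonneg _) ht.2.le
  have hsub := polydiscSlice_cc_subset_ellipsoid hp hz hD hn hscaled_le
  have hzero : ∀ w ∈ polydiscSlice s ρ (t • z), (∃ j ∈ s, w j = 0) → f w = 0 :=
    fun w hw ⟨j, hj, hwj⟩ => hf_zero w ⟨hsub hw,
      prod_eq_zero (mem_filter.2 ⟨mem_univ _, (mem_filter.1 hj).2.trans_le hDk⟩) hwj⟩
  have hscaled_lt : ∀ j ∈ s, ‖(t • z) j‖ < ρ j := fun j hj => by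
    rw [hnorm]
    exact (mul_le_mul_of_nonneg_left (hz_le j hj) ht.1.le).trans_lt
      (mul_lt_of_lt_one_left (hρ j) ht.2)
  calc ‖f (t • z)‖ ≤ ∏ j ∈ s, ‖(t • z) j‖ / ρ j :=
        norm_le_prod_div_of_polydiscSlice s ρ (hfd.mono hsub)
          (fun w hw => (hf_lt w (hsub hw)).le) hzero hscaled_lt
    _ ≤ ∏ j ∈ s, ‖z j‖ / ρ j :=
        prod_le_prod (fun j _ => div_nonneg (norm_nonneg _) (hρ j).le) fun j _ =>
          div_le_div_of_nonneg_right (hscaled_le j) (hρ j).le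
    _ = RR p z k := (RR_eq_prod_div_ellipsoidRadius hp (cc_pos hp hz hD hn).le).symm

end

theorem stmt1_general (n k : ℕ) (hk1 : 1 ≤ k) (hkn : k ≤ n)
    (p : Fin n → ℝ) (hp : ∀ j, 0 < p j)
    (z : Fin n → ℂ) (hz : z ∈ ellipsoid p) (hmon : monIncr p z k) :
    (∀ f : (Fin n → ℂ) → ℂ, DifferentiableOn ℂ f (ellipsoid p) →
        (∀ w ∈ ellipsoid p, ‖f w‖ < 1) →
        (∀ w ∈ zeroSet p k, f w = 0) →
        ‖f z‖ ≤ RR p z k) ∧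
      mob (ellipsoid p) (zeroSet p k) z ≤ RR p z k := by
  have hopen : IsOpen (ellipsoid p) := isOpen_ellipsoid fun j => (hp j).le
  have hbound : ∀ f : (Fin n → ℂ) → ℂ, DifferentiableOn ℂ f (ellipsoid p) →
      (∀ w ∈ ellipsoid p, ‖f w‖ < 1) → (∀ w ∈ zeroSet p k, f w = 0) → ‖f z‖ ≤ RR p z k :=
    fun f hfd hf_lt hf_zero =>
      norm_le_of_forall_smul_le (hfd.continuousOn.continuousAt (hopen.mem_nhds hz))
        fun t ht => norm_apply_smul_le_RR hp hz hk1 hkn hmon hfd hf_lt hf_zero ht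
  exact ⟨hbound, mob_le_of_forall_norm_le hbound⟩

/-- Upper estimate: every competitor `f` for the Möbius function satisfies
`|f(z)| ≤ R(z)`, hence `m_𝔼(A,z) ≤ R(z)`. -/
theorem stmt1 (n k : ℕ) (hn : 2 ≤ n) (hk1 : 1 ≤ k) (hkn : k ≤ n)
    (p : Fin n → ℝ) (hp : ∀ j, 0 < p j)
    (z : Fin n → ℂ) (hz : z ∈ ellipsoid p) (hmon : monIncr p z k) :
    (∀ f : (Fin n → ℂ) → ℂ, DifferentiableOn ℂ f (ellipsoid p) →
        (∀ w ∈ ellipsoid p, ‖f w‖ < 1) →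
        (∀ w ∈ zeroSet p k, f w = 0) →
        ‖f z‖ ≤ RR p z k) ∧
      mob (ellipsoid p) (zeroSet p k) z ≤ RR p z k :=
  stmt1_general n k hk1 hkn p hp z hz hmon
end

section
/- Let n ≥ 2, p_1,…,p_n > 0, k = n, and let z ∈ 𝔼 be such that (p_j|z_j|^{2p_j})_{j=1}^n is monotonically increasing and such that d = n (i.e. 2p_n|z_n|^{2p_n} ≤ c_n(z)). Then m_𝔼(A,z) = R(z); in fact the function f(ζ) := Π_{j=1}^n ζ_j (2p_j/c_n(z))^{1/(2p_j)} is holomorphic on 𝔼, satisfies |f| < 1 on 𝔼, vanishes on A, and |f(z)| = R(z). -/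
open Finset

/-!
With `q = ∑ 1/(2 p_j)`, the polydisc `P` of radii `r_j = (2 p_j q)^{-1/(2 p_j)}` satisfies
`∑ r_j^{2 p_j} = 1`, so `P ⊆ 𝔼`. Applying the one-variable Schwarz lemma one coordinate at a time,
any holomorphic `g` with `|g| < 1` on `P` that vanishes on the coordinate hyperplanes satisfies
`|g ζ| ≤ ∏ |ζ_j| / r_j`, and by continuity this persists on the closure of `P`; the hypotheses
`d = n` and monotonicity say precisely that `z` lies in that closure. Conversely, the weighted
AM-GM inequality shows that `f ζ = ∏ ζ_j / r_j` satisfies `|f| < 1` on all of `𝔼`, and `|f z|`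
attains the bound.
-/

open Metric Function

def polydisc {ι : Type*} (r : ι → ℝ) : Set (ι → ℂ) :=
  Set.pi Set.univ fun j => ball 0 (r j)

section Schwarz

variable {ι : Type*} [DecidableEq ι] {r : ι → ℝ}

lemma update_mem_polydisc {ζ : ι → ℂ} (hζ : ζ ∈ polydisc r) {i : ι} {u : ℂ}
    (hu : u ∈ ball 0 (r i)) : update ζ i u ∈ polydisc r :=
  (Set.update_mem_pi_iff_of_mem hζ).2 fun _ => hu

variable [Fintype ι] {g : (ι → ℂ) → ℂ}

lemma norm_le_div_mul_norm_of_update_eq_zero (hg : DifferentiableOn ℂ g (polydisc r))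
    {ζ : ι → ℂ} (hζ : ζ ∈ polydisc r) (i : ι) {M : ℝ}
    (hM : ∀ u ∈ ball (0 : ℂ) (r i), ‖g (update ζ i u)‖ ≤ M) (h0 : g (update ζ i 0) = 0) :
    ‖g ζ‖ ≤ M / r i * ‖ζ i‖ := by
  have hline : Set.MapsTo (update ζ i) (ball 0 (r i)) (polydisc r) :=
    fun u hu => update_mem_polydisc hζ hu
  have hmaps : Set.MapsTo (g ∘ update ζ i) (ball 0 (r i)) (closedBall (g (update ζ i 0)) M) :=
    fun u hu => by simpa [h0] using hM u hu
  have := Complex.dist_le_div_mul_dist_of_mapsTo_ball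
    (hg.comp (fun u _ => (hasFDerivAt_update ζ u).differentiableAt.differentiableWithinAt) hline) hmaps
    (hζ i (Set.mem_univ i))
  simpa [h0] using this

theorem norm_le_prod_div_of_mem_polydisc (hg : DifferentiableOn ℂ g (polydisc r))
    (hbound : ∀ ζ ∈ polydisc r, ‖g ζ‖ ≤ 1)
    (hzero : ∀ ζ ∈ polydisc r, (∃ j, ζ j = 0) → g ζ = 0)
    {ζ : ι → ℂ} (hζ : ζ ∈ polydisc r) : ‖g ζ‖ ≤ ∏ j, ‖ζ j‖ / r j := by
  suffices ∀ s : Finset ι, (∀ ζ ∈ polydisc r, (∃ j ∈ s, ζ j = 0) → g ζ = 0) →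
      ∀ ζ ∈ polydisc r, ‖g ζ‖ ≤ ∏ j ∈ s, ‖ζ j‖ / r j from
    this Finset.univ (fun ζ hζ ⟨j, _, hj⟩ => hzero ζ hζ ⟨j, hj⟩) ζ hζ
  intro s
  induction s using Finset.induction_on with
  | empty => simpa using hbound
  | insert i s hi ih =>
    intro hs ζ hζ
    have hM : ∀ u ∈ ball (0 : ℂ) (r i),
        ‖g (update ζ i u)‖ ≤ ∏ j ∈ s, ‖ζ j‖ / r j := by
      intro u hu
      refine (ih (fun ξ hξ ⟨j, hj, hξj⟩ => hs ξ hξ ⟨j, Finset.mem_insert_of_mem hj, hξj⟩) _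
        (update_mem_polydisc hζ hu)).trans_eq (Finset.prod_congr rfl fun j hj => ?_)
      rw [update_of_ne (ne_of_mem_of_not_mem hj hi)]
    have h0 : g (update ζ i 0) = 0 :=
      hs _ (update_mem_polydisc hζ (mem_ball_self (pos_of_mem_ball (hζ i (Set.mem_univ i)))))
        ⟨i, Finset.mem_insert_self i s, update_self i 0 ζ⟩
    rw [Finset.prod_insert hi]
    calc ‖g ζ‖ ≤ (∏ j ∈ s, ‖ζ j‖ / r j) / r i * ‖ζ i‖ :=
          norm_le_div_mul_norm_of_update_eq_zero hg hζ i hM h0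
      _ = ‖ζ i‖ / r i * ∏ j ∈ s, ‖ζ j‖ / r j := by ring

end Schwarz

theorem Real.prod_rpow_lt_one_of_sum_lt_one {ι : Type*} [Fintype ι] [Nonempty ι] {a t : ι → ℝ}
    (ha : ∀ j, 0 < a j) (ht : ∀ j, 0 ≤ t j) (hsum : ∑ j, t j < 1) :
    ∏ j, (t j * ((a j)⁻¹ * ∑ i, a i)) ^ a j < 1 := by
  have hA : 0 < ∑ i, a i := Finset.sum_pos (fun j _ => ha j) Finset.univ_nonempty
  have hz : ∀ j ∈ Finset.univ, 0 ≤ t j * ((a j)⁻¹ * ∑ i, a i) :=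
    fun j _ => mul_nonneg (ht j) (mul_nonneg (inv_pos.2 (ha j)).le hA.le)
  have hmean : ∑ j, a j * (t j * ((a j)⁻¹ * ∑ i, a i)) = (∑ j, t j) * ∑ i, a i := by
    rw [Finset.sum_mul]
    exact Finset.sum_congr rfl fun j _ => by field_simp [(ha j).ne']
  have hamgm := Real.geom_mean_le_arith_mean Finset.univ a _ (fun j _ => (ha j).le) hA hz
  rw [hmean, mul_div_cancel_right₀ _ hA.ne'] at hamgm
  have hprod : 0 ≤ ∏ j, (t j * ((a j)⁻¹ * ∑ i, a i)) ^ a j :=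
    Finset.prod_nonneg fun j _ => Real.rpow_nonneg (hz j (Finset.mem_univ j)) _
  rw [← Real.rpow_inv_rpow hprod hA.ne']
  exact Real.rpow_lt_one (Real.rpow_nonneg hprod _) (hamgm.trans_lt hsum) hA

section Ellipsoid

variable {n : ℕ} {p : Fin n → ℝ}

/-- The reciprocal `1 / r_j` of the extremal radius; it equals `(2 p_j / c_n(z))^{1/(2 p_j)}`
because `c_n(z) = 1 / q` (see `cc_self`). -/
noncomputable def ellipsoidCoeff (p : Fin n → ℝ) (j : Fin n) : ℝ :=
  (2 * p j * ∑ i, (2 * p i)⁻¹) ^ (2 * p j)⁻¹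

noncomputable def extremalFunction (p : Fin n → ℝ) (ζ : Fin n → ℂ) : ℂ :=
  ∏ j, ζ j * (ellipsoidCoeff p j : ℂ)

lemma sum_inv_two_mul_pos (hp : ∀ j, 0 < p j) (j : Fin n) : 0 < ∑ i, (2 * p i)⁻¹ :=
  Finset.sum_pos (fun i _ => inv_pos.2 (mul_pos two_pos (hp i))) ⟨j, Finset.mem_univ j⟩

lemma ellipsoidCoeff_pos (hp : ∀ j, 0 < p j) (j : Fin n) : 0 < ellipsoidCoeff p j :=
  Real.rpow_pos_of_pos (mul_pos (mul_pos two_pos (hp j)) (sum_inv_two_mul_pos hp j)) _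

lemma norm_mul_ellipsoidCoeff (hp : ∀ j, 0 < p j) (x : ℂ) (j : Fin n) :
    ‖x‖ * ellipsoidCoeff p j = (‖x‖ ^ (2 * p j) * (2 * p j * ∑ i, (2 * p i)⁻¹)) ^ (2 * p j)⁻¹ := by
  have h2p : 0 < 2 * p j := mul_pos two_pos (hp j)
  rw [Real.mul_rpow (Real.rpow_nonneg (norm_nonneg x) _)
    (mul_nonneg h2p.le (Finset.sum_nonneg fun i _ => (inv_pos.2 (mul_pos two_pos (hp i))).le)),
    Real.rpow_rpow_inv (norm_nonneg x) h2p.ne', ellipsoidCoeff]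

lemma norm_mul_ellipsoidCoeff_le_one (hp : ∀ j, 0 < p j) {x : ℂ} {j : Fin n}
    (hx : 2 * p j * ‖x‖ ^ (2 * p j) ≤ (∑ i, (2 * p i)⁻¹)⁻¹) : ‖x‖ * ellipsoidCoeff p j ≤ 1 := by
  have hQ := sum_inv_two_mul_pos hp j
  rw [norm_mul_ellipsoidCoeff hp]
  refine Real.rpow_le_one (mul_nonneg (Real.rpow_nonneg (norm_nonneg x) _)
    (mul_nonneg (mul_pos two_pos (hp j)).le hQ.le)) ?_ (inv_pos.2 (mul_pos two_pos (hp j))).le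
  calc _ = 2 * p j * ‖x‖ ^ (2 * p j) * ∑ i, (2 * p i)⁻¹ := by ring
    _ ≤ (∑ i, (2 * p i)⁻¹)⁻¹ * ∑ i, (2 * p i)⁻¹ := by gcongr
    _ = 1 := inv_mul_cancel₀ hQ.ne'

lemma polydisc_subset_ellipsoid [NeZero n] (hp : ∀ j, 0 < p j) :
    polydisc (fun j => (ellipsoidCoeff p j)⁻¹) ⊆ ellipsoid p := by
  intro ζ hζ
  have hQ := sum_inv_two_mul_pos hp (0 : Fin n)
  have hlt : ∀ j, ‖ζ j‖ ^ (2 * p j) < (2 * p j)⁻¹ / ∑ i, (2 * p i)⁻¹ := by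
    intro j
    have hj : ‖ζ j‖ * ellipsoidCoeff p j < 1 := by
      have : ‖ζ j‖ < (ellipsoidCoeff p j)⁻¹ := mem_ball_zero_iff.1 (hζ j (Set.mem_univ j))
      rwa [inv_eq_one_div, lt_div_iff₀ (ellipsoidCoeff_pos hp j)] at this
    rw [norm_mul_ellipsoidCoeff hp, Real.rpow_lt_one_iff' (mul_nonneg
      (Real.rpow_nonneg (norm_nonneg _) _) (mul_pos (mul_pos two_pos (hp j)) hQ).le)
      (inv_pos.2 (mul_pos two_pos (hp j)))] at hj
    rwa [inv_eq_one_div, div_div, lt_div_iff₀ (mul_pos (mul_pos two_pos (hp j)) hQ)]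
  calc ∑ j, ‖ζ j‖ ^ (2 * p j) < ∑ j, (2 * p j)⁻¹ / ∑ i, (2 * p i)⁻¹ :=
        Finset.sum_lt_sum_of_nonempty Finset.univ_nonempty fun j _ => hlt j
    _ = 1 := by rw [← Finset.sum_div, div_self hQ.ne']

lemma norm_extremalFunction (hp : ∀ j, 0 < p j) (ζ : Fin n → ℂ) :
    ‖extremalFunction p ζ‖ = ∏ j, ‖ζ j‖ * ellipsoidCoeff p j := by
  simp only [extremalFunction, norm_prod, norm_mul, Complex.norm_real,
    Real.norm_of_nonneg (ellipsoidCoeff_pos hp _).le]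

lemma norm_extremalFunction_lt_one [NeZero n] (hp : ∀ j, 0 < p j) {ζ : Fin n → ℂ}
    (hζ : ζ ∈ ellipsoid p) : ‖extremalFunction p ζ‖ < 1 := by
  have := Real.prod_rpow_lt_one_of_sum_lt_one (a := fun j => (2 * p j)⁻¹)
    (fun j => inv_pos.2 (mul_pos two_pos (hp j))) (fun j => Real.rpow_nonneg (norm_nonneg (ζ j)) _) hζ
  simp only [inv_inv] at this
  rwa [norm_extremalFunction hp, Finset.prod_congr rfl fun j _ => norm_mul_ellipsoidCoeff hp (ζ j) j]

lemma differentiable_extremalFunction : Differentiable ℂ (extremalFunction p) := by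
  unfold extremalFunction
  fun_prop

lemma mem_zeroSet_self_iff {w : Fin n → ℂ} : w ∈ zeroSet p n ↔ w ∈ ellipsoid p ∧ ∃ j, w j = 0 := by
  simp [zeroSet, Finset.prod_eq_zero_iff]

lemma extremalFunction_eq_zero {ζ : Fin n → ℂ} (hζ : ∃ j, ζ j = 0) : extremalFunction p ζ = 0 := by
  obtain ⟨j, hj⟩ := hζ
  exact Finset.prod_eq_zero (Finset.mem_univ j) (by rw [hj, zero_mul])

theorem norm_le_prod_norm_mul_ellipsoidCoeff [NeZero n] (hp : ∀ j, 0 < p j)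
    {g : (Fin n → ℂ) → ℂ} (hg : DifferentiableOn ℂ g (ellipsoid p))
    (hg1 : ∀ w ∈ ellipsoid p, ‖g w‖ < 1) (hg0 : ∀ w ∈ zeroSet p n, g w = 0)
    {z : Fin n → ℂ} (hz : z ∈ ellipsoid p) (hzκ : ∀ j, ‖z j‖ * ellipsoidCoeff p j ≤ 1) :
    ‖g z‖ ≤ ∏ j, ‖z j‖ * ellipsoidCoeff p j := by
  have hP := polydisc_subset_ellipsoid hp
  have hschwarz : ∀ ζ ∈ polydisc fun j => (ellipsoidCoeff p j)⁻¹,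
      ‖g ζ‖ ≤ ∏ j, ‖ζ j‖ * ellipsoidCoeff p j := fun ζ hζ => by
    simpa only [div_inv_eq_mul] using norm_le_prod_div_of_mem_polydisc (hg.mono hP)
      (fun w hw => (hg1 w (hP hw)).le)
      (fun w hw hw0 => hg0 w (mem_zeroSet_self_iff.2 ⟨hP hw, hw0⟩)) hζ
  have hz_closure : z ∈ closure (polydisc fun j => (ellipsoidCoeff p j)⁻¹) := by
    rw [polydisc, closure_pi_set]
    intro j _
    dsimp only
    rw [closure_ball _ (inv_pos.2 (ellipsoidCoeff_pos hp j)).ne', mem_closedBall_zero_iff,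
      inv_eq_one_div, le_div_iff₀ (ellipsoidCoeff_pos hp j)]
    exact hzκ j
  exact ContinuousWithinAt.closure_le hz_closure ((hg.continuousOn z hz).mono hP).norm
    (by fun_prop : Continuous fun ζ : Fin n → ℂ => ∏ j, ‖ζ j‖ * ellipsoidCoeff p j).continuousWithinAt
    hschwarz

lemma cc_self (p : Fin n → ℝ) (z : Fin n → ℂ) : cc p z n = (∑ i, (2 * p i)⁻¹)⁻¹ := by
  have hall : univ.filter (fun j : Fin n => (j : ℕ) < n) = univ :=
    Finset.filter_true_of_mem fun j _ => j.isLt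
  have hnone : univ.filter (fun j : Fin n => n ≤ (j : ℕ)) = ∅ :=
    Finset.filter_false_of_mem fun j _ => not_le.2 j.isLt
  rw [cc, rr, qq, hall, hnone, Finset.sum_empty, sub_zero, one_div]

lemma RR_of_dd_eq_self {z : Fin n → ℂ} (hd : dd p z n = n) :
    RR p z n = ∏ j, ‖z j‖ * (2 * p j / cc p z n) ^ (2 * p j)⁻¹ := by
  simp [RR, hd]

end Ellipsoid

/-- The case `k = n`, `d = n`: the explicit product function is extremal and
`m_𝔼(A,z) = R(z)`. -/
theorem stmt2 (n : ℕ) (hn : 2 ≤ n)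
    (p : Fin n → ℝ) (hp : ∀ j, 0 < p j)
    (z : Fin n → ℂ) (hz : z ∈ ellipsoid p) (hmon : monIncr p z n)
    (hd : dd p z n = n)
    (hdi : 2 * p ⟨n - 1, by omega⟩ *
        ‖z ⟨n - 1, by omega⟩‖ ^ (2 * p ⟨n - 1, by omega⟩) ≤ cc p z n)
    (f : (Fin n → ℂ) → ℂ)
    (hf : f = fun ζ => ∏ j, ζ j * (((2 * p j / cc p z n) ^ (2 * p j)⁻¹ : ℝ) : ℂ)) :
    mob (ellipsoid p) (zeroSet p n) z = RR p z n ∧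
      DifferentiableOn ℂ f (ellipsoid p) ∧
      (∀ w ∈ ellipsoid p, ‖f w‖ < 1) ∧
      (∀ w ∈ zeroSet p n, f w = 0) ∧
      ‖f z‖ = RR p z n := by
  have : NeZero n := ⟨by omega⟩
  have hcoeff : ∀ j, (2 * p j / cc p z n) ^ (2 * p j)⁻¹ = ellipsoidCoeff p j := fun j => by
    rw [cc_self, div_inv_eq_mul]; rfl
  have hR : RR p z n = ∏ j, ‖z j‖ * ellipsoidCoeff p j := by
    simp only [RR_of_dd_eq_self hd, hcoeff]
  have hzκ : ∀ j, ‖z j‖ * ellipsoidCoeff p j ≤ 1 := fun j => by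
    refine norm_mul_ellipsoidCoeff_le_one hp ?_
    have := hmon j ⟨n - 1, by omega⟩ (by simp; omega) (Fin.le_def.2 (by simp; omega))
    rw [← cc_self p z]
    linarith
  obtain rfl : f = extremalFunction p := by
    rw [hf]; simp only [hcoeff]; rfl
  have hfz : ‖extremalFunction p z‖ = RR p z n := by rw [norm_extremalFunction hp, hR]
  have hdiff := (differentiable_extremalFunction (p := p)).differentiableOn (s := ellipsoid p)
  have hlt : ∀ w ∈ ellipsoid p, ‖extremalFunction p w‖ < 1 :=
    fun w hw => norm_extremalFunction_lt_one hp hw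
  have hzero : ∀ w ∈ zeroSet p n, extremalFunction p w = 0 :=
    fun w hw => extremalFunction_eq_zero (mem_zeroSet_self_iff.1 hw).2
  refine ⟨IsGreatest.csSup_eq ⟨⟨_, hdiff, hlt, hzero, hfz.symm⟩, ?_⟩, hdiff, hlt, hzero, hfz⟩
  rintro _ ⟨g, hg, hg1, hg0, rfl⟩
  rw [hR]
  exact norm_le_prod_norm_mul_ellipsoidCoeff hp hg hg1 hg0 hz hzκ
end

section
/- (Theorem 1(c), Möbius part.) Let n = 2, k = 1, p_1 > 0, and p_2 ≥ 1/2. Then for every z ∈ 𝔼, m_𝔼(A,z) = R(z). -/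
open Finset

/-!
Restricting an admissible `f` to the analytic disc `c ↦ ![c, z 1]`, of radius
`ρ = (1 - ‖z 1‖ ^ (2 * p 1)) ^ (2 * p 0)⁻¹`, the Schwarz lemma gives `‖f z‖ ≤ ‖z 0‖ / ρ`.
When `z 1 ≠ 0` this bound is attained by
`w ↦ w 0 * ((1 - conj (z 1) * w 1 / ‖z 1‖) / (1 - ‖z 1‖)) ^ (-β / (2 * p 0)) / ρ`,
with `β` chosen so that `r ↦ (1 - r ^ α) / (1 - r) ^ β`, `α = 2 * p 1`, attains its maximum over
`[0, 1)` at `r = ‖z 1‖`: this is exactly what keeps that function below `1` on the ellipsoid.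
For `α ≥ 1` the maximum is located by the monotonicity of the ratio of the logarithmic
derivatives of `1 - r ^ α` and `1 - r`, which comes down to Bernoulli's inequality.
-/

open Real ComplexConjugate

lemma isMaxOn_of_hasDerivAt {f f' : ℝ → ℝ} {l u c : ℝ} (hc : c ∈ Set.Ioo l u)
    (hf : ContinuousOn f (Set.Ico l u)) (hf' : ∀ x ∈ Set.Ioo l u, HasDerivAt f (f' x) x)
    (hleft : ∀ x ∈ Set.Ioo l c, 0 ≤ f' x) (hright : ∀ x ∈ Set.Ioo c u, f' x ≤ 0) :
    IsMaxOn f (Set.Ico l u) c := by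
  intro x hx
  rcases le_total x c with hxc | hcx
  · refine monotoneOn_of_hasDerivWithinAt_nonneg (f' := f') (convex_Icc l c)
      (hf.mono (Set.Icc_subset_Ico_right hc.2)) (fun y hy => ?_) (fun y hy => ?_)
      ⟨hx.1, hxc⟩ ⟨hc.1.le, le_rfl⟩ hxc
    · rw [interior_Icc] at hy
      exact (hf' y ⟨hy.1, hy.2.trans hc.2⟩).hasDerivWithinAt
    · rw [interior_Icc] at hy
      exact hleft y hy
  · refine antitoneOn_of_hasDerivWithinAt_nonpos (f' := f') (convex_Ico c u)
      (hf.mono (Set.Ico_subset_Ico_left hc.1.le)) (fun y hy => ?_) (fun y hy => ?_)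
      ⟨le_rfl, hc.2⟩ ⟨hcx, hx.2⟩ hcx
    · rw [interior_Ico] at hy
      exact (hf' y ⟨hc.1.trans hy.1, hy.2⟩).hasDerivWithinAt
    · rw [interior_Ico] at hy
      exact hright y hy

noncomputable def logDerivRatio (α r : ℝ) : ℝ := α * r ^ (α - 1) * (1 - r) / (1 - r ^ α)

section LogDerivRatio

variable {α a r : ℝ}

lemma one_sub_rpow_pos (hα : 0 < α) (hr0 : 0 ≤ r) (hr1 : r < 1) : 0 < 1 - r ^ α :=
  sub_pos.2 (rpow_lt_one hr0 hr1 hα)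

lemma logDerivRatio_nonneg (hα : 0 < α) (hr0 : 0 ≤ r) (hr1 : r < 1) : 0 ≤ logDerivRatio α r := by
  have := one_sub_rpow_pos hα hr0 hr1
  have : 0 ≤ 1 - r := by linarith
  unfold logDerivRatio
  positivity

lemma hasDerivAt_logDerivRatio (hα : 0 < α) (hr0 : 0 < r) (hr1 : r < 1) :
    HasDerivAt (logDerivRatio α)
      (α * r ^ (α - 2) * (α - 1 - α * r + r ^ α) / (1 - r ^ α) ^ 2) r := by
  have hpos := one_sub_rpow_pos hα hr0.le hr1
  have hnum : HasDerivAt (fun r => α * r ^ (α - 1) * (1 - r))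
      (α * ((α - 1) * r ^ (α - 1 - 1)) * (1 - r) + α * r ^ (α - 1) * (-1)) r :=
    ((hasDerivAt_rpow_const (Or.inl hr0.ne')).const_mul α).mul
      ((hasDerivAt_id' r).const_sub 1)
  have hden : HasDerivAt (fun r => 1 - r ^ α) (-(α * r ^ (α - 1))) r :=
    (hasDerivAt_rpow_const (Or.inl hr0.ne')).const_sub 1
  refine (hnum.div hden hpos.ne').congr_deriv ?_
  have h1 : r ^ (α - 1) = r ^ (α - 2) * r := by
    rw [← rpow_add_one hr0.ne']; ring_nf
  have h2 : r ^ α = r ^ (α - 2) * r ^ 2 := by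
    rw [← rpow_add_natCast hr0.ne']; ring_nf
  rw [show α - 1 - 1 = α - 2 by ring, h1, h2]
  ring

lemma monotoneOn_logDerivRatio (hα : 1 ≤ α) : MonotoneOn (logDerivRatio α) (Set.Ioo 0 1) := by
  have hderiv : ∀ r ∈ Set.Ioo (0 : ℝ) 1, HasDerivAt (logDerivRatio α)
      (α * r ^ (α - 2) * (α - 1 - α * r + r ^ α) / (1 - r ^ α) ^ 2) r :=
    fun r hr => hasDerivAt_logDerivRatio (by linarith) hr.1 hr.2
  refine monotoneOn_of_hasDerivWithinAt_nonneg (convex_Ioo 0 1)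
    (fun r hr => (hderiv r hr).continuousAt.continuousWithinAt)
    (fun r hr => (hderiv r (interior_subset hr)).hasDerivWithinAt) fun r hr => ?_
  rw [interior_Ioo] at hr
  have hbernoulli : 1 + α * (r - 1) ≤ r ^ α := by
    simpa using one_add_mul_self_le_rpow_one_add (s := r - 1) (by linarith [hr.1]) hα
  have : 0 ≤ α - 1 - α * r + r ^ α := by linarith
  have : 0 ≤ r ^ (α - 2) := rpow_nonneg hr.1.le _
  positivity

lemma hasDerivAt_log_one_sub_rpow_sub_mul_log (β : ℝ) (hα : 0 < α) (hr0 : 0 < r) (hr1 : r < 1) :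
    HasDerivAt (fun r => log (1 - r ^ α) - β * log (1 - r))
      ((β - logDerivRatio α r) / (1 - r)) r := by
  have hpos := one_sub_rpow_pos hα hr0.le hr1
  have h1r : 1 - r ≠ 0 := by linarith
  have hden : HasDerivAt (fun r => 1 - r ^ α) (-(α * r ^ (α - 1))) r :=
    (hasDerivAt_rpow_const (Or.inl hr0.ne')).const_sub 1
  refine ((hden.log hpos.ne').sub
    ((((hasDerivAt_id' r).const_sub 1).log h1r).const_mul β)).congr_deriv ?_
  unfold logDerivRatio
  field_simp
  ring

lemma isMaxOn_log_one_sub_rpow_sub_mul_log (hα : 1 ≤ α) (ha : a ∈ Set.Ioo 0 1) :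
    IsMaxOn (fun r => log (1 - r ^ α) - logDerivRatio α a * log (1 - r)) (Set.Ico 0 1) a := by
  have hα0 : 0 < α := by linarith
  refine isMaxOn_of_hasDerivAt ha ?_
    (fun r hr => hasDerivAt_log_one_sub_rpow_sub_mul_log _ hα0 hr.1 hr.2)
    (fun r hr => ?_) (fun r hr => ?_)
  · refine ContinuousOn.sub ?_ (continuousOn_const.mul ?_)
    · exact (continuous_const.sub (continuous_rpow_const hα0.le)).continuousOn.log
        fun r hr => (one_sub_rpow_pos hα0 hr.1 hr.2).ne'
    · exact ContinuousOn.log (by fun_prop) fun r hr => by linarith [hr.2]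
  · have := monotoneOn_logDerivRatio hα ⟨hr.1, hr.2.trans ha.2⟩ ha hr.2.le
    exact div_nonneg (by linarith) (by linarith [hr.2, ha.2])
  · have := monotoneOn_logDerivRatio hα ha ⟨ha.1.trans hr.1, hr.2⟩ hr.1.le
    exact div_nonpos_of_nonpos_of_nonneg (by linarith) (by linarith [hr.2])

lemma one_sub_rpow_mul_div_rpow_le (hα : 1 ≤ α) (ha : a ∈ Set.Ioo 0 1) (hr0 : 0 ≤ r) (hr1 : r < 1) :
    (1 - r ^ α) * ((1 - a) / (1 - r)) ^ logDerivRatio α a ≤ 1 - a ^ α := by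
  have hα0 : 0 < α := by linarith
  have hmax := isMaxOn_log_one_sub_rpow_sub_mul_log hα ha ⟨hr0, hr1⟩
  simp only [Set.mem_ofPred_eq] at hmax
  have h1r : 0 < 1 - r := by linarith
  have h1a : 0 < 1 - a := by linarith [ha.2]
  have hr := one_sub_rpow_pos hα0 hr0 hr1
  have ha' := one_sub_rpow_pos hα0 ha.1.le ha.2
  rw [← log_le_log_iff (by positivity) ha', log_mul hr.ne' (by positivity),
    log_rpow (by positivity), log_div h1a.ne' h1r.ne']
  linarith

lemma one_sub_rpow_rpow_inv_mul_le {P b : ℝ} (hP : 0 < P) (hα : 1 ≤ α)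
    (ha : a ∈ Set.Ioo 0 1) (hr0 : 0 ≤ r) (hr1 : r < 1) (hb : 1 - r ≤ b) :
    (1 - r ^ α) ^ P⁻¹ * (b / (1 - a)) ^ (-(logDerivRatio α a / P)) ≤ (1 - a ^ α) ^ P⁻¹ := by
  have hα0 : 0 < α := by linarith
  have h1a : 0 < 1 - a := by linarith [ha.2]
  have h1r : 0 < 1 - r := by linarith
  have hb0 : 0 < b := h1r.trans_le hb
  have hβ := logDerivRatio_nonneg hα0 ha.1.le ha.2
  have hr := one_sub_rpow_pos hα0 hr0 hr1
  rw [rpow_neg (by positivity), ← inv_rpow (by positivity), inv_div, div_eq_mul_inv _ P,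
    rpow_mul (by positivity), ← mul_rpow hr.le (by positivity)]
  refine rpow_le_rpow (by positivity) ?_ (by positivity)
  calc (1 - r ^ α) * ((1 - a) / b) ^ logDerivRatio α a
      ≤ (1 - r ^ α) * ((1 - a) / (1 - r)) ^ logDerivRatio α a := by
        gcongr
    _ ≤ 1 - a ^ α := one_sub_rpow_mul_div_rpow_le hα ha hr0 hr1

end LogDerivRatio

lemma norm_le_norm_of_mapsTo_ball_comp {E : Type*} [NormedAddCommGroup E] [NormedSpace ℂ E]
    {G : Set E} {f : E → ℂ} {L : ℂ → E} (hf : DifferentiableOn ℂ f G)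
    (hfG : ∀ w ∈ G, ‖f w‖ < 1) (hL : Differentiable ℂ L) (hLG : Set.MapsTo L (Metric.ball 0 1) G)
    (hL0 : f (L 0) = 0) {c : ℂ} (hc : ‖c‖ < 1) : ‖f (L c)‖ ≤ ‖c‖ :=
  Complex.norm_le_norm_of_mapsTo_ball (f := f ∘ L) (hf.comp hL.differentiableOn hLG)
    (fun _ ht => mem_closedBall_zero_iff.2 (hfG _ (hLG ht)).le) hL0 hc

lemma norm_lt_one_of_mem_ellipsoid {n : ℕ} {p : Fin n → ℝ} {z : Fin n → ℂ} {j : Fin n}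
    (hp : 0 < p j) (hz : z ∈ ellipsoid p) : ‖z j‖ < 1 := by
  have hle : ‖z j‖ ^ (2 * p j) ≤ ∑ i, ‖z i‖ ^ (2 * p i) :=
    single_le_sum (f := fun i => ‖z i‖ ^ (2 * p i)) (fun i _ => rpow_nonneg (norm_nonneg _) _)
      (mem_univ j)
  have hlt : ‖z j‖ ^ (2 * p j) < 1 := hle.trans_lt hz
  by_contra! h
  linarith [one_le_rpow h (by positivity : 0 ≤ 2 * p j)]

lemma mem_ellipsoid_two {p : Fin 2 → ℝ} {z : Fin 2 → ℂ} :
    z ∈ ellipsoid p ↔ ‖z 0‖ ^ (2 * p 0) + ‖z 1‖ ^ (2 * p 1) < 1 := by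
  simp [ellipsoid, Fin.sum_univ_two]

lemma mem_zeroSet_two_one {p : Fin 2 → ℝ} {z : Fin 2 → ℂ} :
    z ∈ zeroSet p 1 ↔ z ∈ ellipsoid p ∧ z 0 = 0 := by
  rw [zeroSet, Set.mem_ofPred_eq, show univ.filter (fun j : Fin 2 => (j : ℕ) < 1) = {0} by decide,
    prod_singleton]

noncomputable def sliceRadius (p : Fin 2 → ℝ) (ζ : ℂ) : ℝ := (1 - ‖ζ‖ ^ (2 * p 1)) ^ (2 * p 0)⁻¹

section Slice

variable {p : Fin 2 → ℝ} {z : Fin 2 → ℂ}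

lemma norm_lt_sliceRadius (hp0 : 0 < p 0) (hz : z ∈ ellipsoid p) :
    ‖z 0‖ < sliceRadius p (z 1) := by
  have hz' := mem_ellipsoid_two.1 hz
  have := rpow_nonneg (norm_nonneg (z 0)) (2 * p 0)
  rw [sliceRadius, lt_rpow_inv_iff_of_pos (norm_nonneg _) (by linarith) (by linarith)]
  linarith

lemma sliceRadius_pos {ζ : ℂ} (hζ : ‖ζ‖ ^ (2 * p 1) < 1) : 0 < sliceRadius p ζ :=
  rpow_pos_of_pos (sub_pos.2 hζ) _

lemma mem_ellipsoid_of_norm_lt_sliceRadius (hp0 : 0 < p 0) {c ζ : ℂ}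
    (hζ : ‖ζ‖ ^ (2 * p 1) < 1) (hc : ‖c‖ < sliceRadius p ζ) : ![c, ζ] ∈ ellipsoid p := by
  rw [sliceRadius, lt_rpow_inv_iff_of_pos (norm_nonneg _) (by linarith) (by linarith)] at hc
  rw [mem_ellipsoid_two]
  simp only [Matrix.cons_val_zero, Matrix.cons_val_one]
  linarith

lemma norm_le_div_sliceRadius (hp0 : 0 < p 0) (hz : z ∈ ellipsoid p)
    {f : (Fin 2 → ℂ) → ℂ} (hf : DifferentiableOn ℂ f (ellipsoid p))
    (hfb : ∀ w ∈ ellipsoid p, ‖f w‖ < 1) (hf0 : ∀ w ∈ zeroSet p 1, f w = 0) :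
    ‖f z‖ ≤ ‖z 0‖ / sliceRadius p (z 1) := by
  have hζ : ‖z 1‖ ^ (2 * p 1) < 1 := by
    linarith [mem_ellipsoid_two.1 hz, rpow_nonneg (norm_nonneg (z 0)) (2 * p 0)]
  set ρ := sliceRadius p (z 1)
  have hρ : 0 < ρ := sliceRadius_pos hζ
  set L : ℂ → Fin 2 → ℂ := fun c => ![c * ρ, z 1]
  have hLG : Set.MapsTo L (Metric.ball 0 1) (ellipsoid p) := fun c hc => by
    refine mem_ellipsoid_of_norm_lt_sliceRadius hp0 hζ ?_
    rw [norm_mul, Complex.norm_real, norm_of_nonneg hρ.le]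
    exact mul_lt_of_lt_one_left hρ (mem_ball_zero_iff.1 hc)
  have hL0 : f (L 0) = 0 :=
    hf0 _ (mem_zeroSet_two_one.2 ⟨hLG (Metric.mem_ball_self one_pos), by simp [L]⟩)
  have hLz : L (z 0 / ρ) = z := by
    ext i; fin_cases i <;> simp [L, hρ.ne']
  have hc : ‖z 0 / ρ‖ = ‖z 0‖ / ρ := by
    rw [norm_div, Complex.norm_real, norm_of_nonneg hρ.le]
  have hLd : Differentiable ℂ L :=
    differentiable_pi.2 fun i => by fin_cases i <;> simp [L]
  have := norm_le_norm_of_mapsTo_ball_comp hf hfb hLd hLG hL0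
    (hc ▸ (div_lt_one hρ).2 (norm_lt_sliceRadius hp0 hz))
  rwa [hLz, hc] at this

end Slice

noncomputable def extremalFun (p : Fin 2 → ℝ) (ζ : ℂ) (w : Fin 2 → ℂ) : ℂ :=
  w 0 * ((1 - conj ζ * w 1 / ‖ζ‖) / (1 - ‖ζ‖))
    ^ ((-(logDerivRatio (2 * p 1) ‖ζ‖ / (2 * p 0)) : ℝ) : ℂ) / sliceRadius p ζ

section Extremal

variable {p : Fin 2 → ℝ} {ζ : ℂ}

lemma norm_conj_mul_div_norm_le (ζ w : ℂ) : ‖conj ζ * w / ‖ζ‖‖ ≤ ‖w‖ := by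
  rcases eq_or_ne ζ 0 with rfl | hζ
  · simp
  · rw [norm_div, norm_mul, Complex.norm_conj, Complex.norm_real, norm_norm,
      mul_div_cancel_left₀ _ (norm_ne_zero_iff.2 hζ)]

lemma one_sub_norm_le_norm_one_sub_conj_mul_div (ζ w : ℂ) :
    1 - ‖w‖ ≤ ‖1 - conj ζ * w / ‖ζ‖‖ := by
  have := norm_sub_norm_le (1 : ℂ) (conj ζ * w / ‖ζ‖)
  rw [norm_one] at this
  linarith [norm_conj_mul_div_norm_le ζ w]

lemma differentiableOn_extremalFun (hζ : ‖ζ‖ < 1) :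
    DifferentiableOn ℂ (extremalFun p ζ) {w | ‖w 1‖ < 1} := by
  intro w hw
  have hre : 0 < (1 - conj ζ * w 1 / ‖ζ‖).re := by
    have := (Complex.re_le_norm _).trans (norm_conj_mul_div_norm_le ζ (w 1))
    rw [Complex.sub_re, Complex.one_re]
    linarith [hw.out]
  have hslit : (1 - conj ζ * w 1 / ‖ζ‖) / ((1 - ‖ζ‖ : ℝ) : ℂ) ∈ Complex.slitPlane :=
    Or.inl (by rw [Complex.div_ofReal_re]; exact div_pos hre (by linarith))
  push_cast at hslit
  have hbase : DifferentiableAt ℂ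
      (fun w : Fin 2 → ℂ => (1 - conj ζ * w 1 / ‖ζ‖) / (1 - ‖ζ‖)) w := by
    fun_prop
  have hpow := hbase.cpow_const
    (c := ((-(logDerivRatio (2 * p 1) ‖ζ‖ / (2 * p 0)) : ℝ) : ℂ)) hslit
  unfold extremalFun
  fun_prop

lemma norm_extremalFun (hp1 : 0 < p 1) (hζ : ‖ζ‖ < 1) (w : Fin 2 → ℂ) :
    ‖extremalFun p ζ w‖ = ‖w 0‖ * (‖1 - conj ζ * w 1 / ‖ζ‖‖ / (1 - ‖ζ‖))
      ^ (-(logDerivRatio (2 * p 1) ‖ζ‖ / (2 * p 0))) / sliceRadius p ζ := by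
  have h1a : (1 : ℂ) - ‖ζ‖ = ((1 - ‖ζ‖ : ℝ) : ℂ) := by push_cast; rfl
  rw [extremalFun, norm_div, norm_mul, Complex.norm_cpow_real, norm_div, h1a, Complex.norm_real,
    norm_of_nonneg (by linarith), Complex.norm_real, norm_of_nonneg (sliceRadius_pos ?_).le]
  exact rpow_lt_one (norm_nonneg ζ) hζ (by linarith)

lemma norm_extremalFun_lt_one (hp0 : 0 < p 0) (hp1 : 1 ≤ 2 * p 1) (hζ0 : ζ ≠ 0) (hζ : ‖ζ‖ < 1)
    {w : Fin 2 → ℂ} (hw : w ∈ ellipsoid p) : ‖extremalFun p ζ w‖ < 1 := by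
  have hρζ : 0 < sliceRadius p ζ := sliceRadius_pos (rpow_lt_one (norm_nonneg ζ) hζ (by linarith))
  have hw1 : ‖w 1‖ < 1 := norm_lt_one_of_mem_ellipsoid (by linarith) hw
  have hB := one_sub_norm_le_norm_one_sub_conj_mul_div ζ (w 1)
  have hbound := one_sub_rpow_rpow_inv_mul_le (mul_pos two_pos hp0) hp1
    ⟨norm_pos_iff.2 hζ0, hζ⟩ (norm_nonneg _) hw1 hB
  rw [norm_extremalFun (by linarith) hζ, div_lt_one hρζ]
  calc _ < sliceRadius p (w 1) * _ := by
        gcongr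
        · exact rpow_pos_of_pos (div_pos (by linarith) (by linarith)) _
        · exact norm_lt_sliceRadius hp0 hw
    _ ≤ sliceRadius p ζ := hbound

lemma extremalFun_self {z : Fin 2 → ℂ} (hz : ‖z 1‖ ≠ 1) :
    extremalFun p (z 1) z = z 0 / sliceRadius p (z 1) := by
  have : (1 : ℂ) - ‖z 1‖ ≠ 0 := sub_ne_zero.2 (by exact_mod_cast hz.symm)
  simp [extremalFun, Complex.conj_mul', pow_two, this]

end Extremal

lemma cc_two_one (p : Fin 2 → ℝ) (z : Fin 2 → ℂ) :
    cc p z 1 = 2 * p 0 * (1 - ‖z 1‖ ^ (2 * p 1)) := by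
  rw [cc, rr, qq, show univ.filter (fun j : Fin 2 => 1 ≤ (j : ℕ)) = {1} by decide,
    show univ.filter (fun j : Fin 2 => (j : ℕ) < 1) = {0} by decide, sum_singleton,
    sum_singleton, div_inv_eq_mul, mul_comm]

lemma dd_two_one {p : Fin 2 → ℝ} {z : Fin 2 → ℂ} (hp0 : 0 ≤ p 0) (hz : z ∈ ellipsoid p) :
    dd p z 1 = 1 := by
  have hz' := mem_ellipsoid_two.1 hz
  rw [dd]
  refine (congrArg sSup ?_).trans (csSup_singleton 1)
  ext s
  simp only [Set.mem_ofPred_eq, Set.mem_singleton_iff]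
  constructor
  · rintro ⟨h1, h2, -⟩
    exact le_antisymm h2 h1
  · rintro rfl
    refine ⟨le_rfl, le_rfl, fun _ => ?_⟩
    show 2 * p 0 * ‖z 0‖ ^ (2 * p 0) ≤ cc p z 1
    rw [cc_two_one]
    exact mul_le_mul_of_nonneg_left (by linarith) (by linarith)

lemma RR_two_one {p : Fin 2 → ℝ} {z : Fin 2 → ℂ} (hp0 : 0 < p 0) (hz : z ∈ ellipsoid p) :
    RR p z 1 = ‖z 0‖ / sliceRadius p (z 1) := by
  have h1 : 0 ≤ 1 - ‖z 1‖ ^ (2 * p 1) := by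
    linarith [mem_ellipsoid_two.1 hz, rpow_nonneg (norm_nonneg (z 0)) (2 * p 0)]
  rw [RR, dd_two_one hp0.le hz, show univ.filter (fun j : Fin 2 => (j : ℕ) < 1) = {0} by decide,
    prod_singleton, cc_two_one, div_mul_cancel_left₀ (by positivity), inv_rpow h1, sliceRadius,
    div_eq_mul_inv]

lemma exists_extremal {p : Fin 2 → ℝ} {z : Fin 2 → ℂ} (hp0 : 0 < p 0) (hp1 : 1 ≤ 2 * p 1)
    (hz : z ∈ ellipsoid p) :
    ∃ f : (Fin 2 → ℂ) → ℂ, DifferentiableOn ℂ f (ellipsoid p) ∧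
      (∀ w ∈ ellipsoid p, ‖f w‖ < 1) ∧ (∀ w ∈ zeroSet p 1, f w = 0) ∧
      ‖f z‖ = ‖z 0‖ / sliceRadius p (z 1) := by
  have hp1' : 0 < p 1 := by linarith
  rcases eq_or_ne (z 1) 0 with hz1 | hz1
  · refine ⟨fun w => w 0, by fun_prop, fun w hw => norm_lt_one_of_mem_ellipsoid hp0 hw,
      fun w hw => (mem_zeroSet_two_one.1 hw).2, ?_⟩
    simp [sliceRadius, hz1, zero_rpow (mul_pos two_pos hp1').ne']
  · have hz1' : ‖z 1‖ < 1 := norm_lt_one_of_mem_ellipsoid hp1' hz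
    refine ⟨extremalFun p (z 1),
      (differentiableOn_extremalFun hz1').mono fun w hw => norm_lt_one_of_mem_ellipsoid hp1' hw,
      fun w hw => norm_extremalFun_lt_one hp0 hp1 hz1 hz1' hw,
      fun w hw => by simp [extremalFun, (mem_zeroSet_two_one.1 hw).2], ?_⟩
    rw [extremalFun_self hz1'.ne, norm_div, Complex.norm_real,
      norm_of_nonneg (sliceRadius_pos (rpow_lt_one (norm_nonneg _) hz1' (by linarith))).le]

/-- Theorem 1(c), Möbius part: for `n = 2`, `k = 1`, `p_1 > 0`, `p_2 ≥ 1/2`,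
`m_𝔼(A,z) = R(z)` for every `z ∈ 𝔼`. -/
theorem stmt4 (p : Fin 2 → ℝ) (hp : ∀ j, 0 < p j) (hp2 : (1 : ℝ) / 2 ≤ p 1)
    (z : Fin 2 → ℂ) (hz : z ∈ ellipsoid p) :
    mob (ellipsoid p) (zeroSet p 1) z = RR p z 1 := by
  obtain ⟨f, hf, hfb, hf0, hfz⟩ := exists_extremal (hp 0) (by linarith) hz
  rw [RR_two_one (hp 0) hz]
  refine IsGreatest.csSup_eq ⟨⟨f, hf, hfb, hf0, hfz.symm⟩, ?_⟩
  rintro _ ⟨g, hg, hgb, hg0, rfl⟩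
  exact norm_le_div_sliceRadius (hp 0) hz hg hgb hg0
end

section
/- (Theorem 1(d), restated via the Green-function formula g_𝔼(A,·) = R.) Let n ≥ 2, p_1,…,p_n > 0, 1 ≤ k ≤ n, and suppose there exists j ∈ {k+1,…,n} with p_j < 1/2. Then there exists z ∈ 𝔼 with (p_j|z_j|^{2p_j})_{j=1}^k monotonically increasing such that m_𝔼(A,z) < R(z). -/
/-!
Take `z = (t, m₂, …, m_k, 0, …, w, …, 0)`, with `w` in a slot `j₀ > k` where `p_{j₀} < 1/2` and
the coordinates `2, …, k` on the common level `p_j |z_j|^{2p_j} = c := 1/(2 q_k)`. This level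
forces `d(z) = 1`, so `R(z) = t (D - |w|^{2p_{j₀}})^{-1/(2p₁)}` with `D = c/p₁`, which grows in
`|w|` with the exponent `2p_{j₀} < 1`. For a competitor `f` of `m`, the Schwarz lemma in the first
variable gives `|f(t, …, 0, …)| ≤ t D^{-1/(2p₁)}`, and the Schwarz lemma in the variable `w` makes
`w ↦ f(t, …, w, …)` Lipschitz near `0`. For small `w > 0` the Hölder growth of `R` beats the
Lipschitz growth of `m`.
-/

open Finset

lemma inv_rpow_add_le_inv_rpow_sub {D x a : ℝ} (hD : 0 < D) (hxD : x < D)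
    (ha : 0 ≤ a) : (D ^ a)⁻¹ + a * (D ^ a)⁻¹ * D⁻¹ * x ≤ ((D - x) ^ a)⁻¹ := by
  set y := x / D
  have hy : 0 < 1 - y := by rw [sub_pos, div_lt_one hD]; exact hxD
  have hsplit : D - x = D * (1 - y) := by rw [mul_sub, mul_one, mul_div_cancel₀ _ hD.ne']
  have hbase : (1 - y) ^ a ≤ Real.exp (-(a * y)) := by
    calc (1 - y) ^ a ≤ Real.exp (-y) ^ a :=
          Real.rpow_le_rpow hy.le (Real.one_sub_le_exp_neg y) ha
      _ = Real.exp (-(a * y)) := by rw [← Real.exp_mul]; ring_nf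
  have hlin : 1 + a * y ≤ ((1 - y) ^ a)⁻¹ :=
    calc 1 + a * y ≤ Real.exp (a * y) := by linarith [Real.add_one_le_exp (a * y)]
      _ = (Real.exp (-(a * y)))⁻¹ := by rw [Real.exp_neg, inv_inv]
      _ ≤ ((1 - y) ^ a)⁻¹ := inv_anti₀ (Real.rpow_pos_of_pos hy a) hbase
  calc (D ^ a)⁻¹ + a * (D ^ a)⁻¹ * D⁻¹ * x = (D ^ a)⁻¹ * (1 + a * y) := by ring
    _ ≤ (D ^ a)⁻¹ * ((1 - y) ^ a)⁻¹ := by gcongr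
    _ = ((D - x) ^ a)⁻¹ := by rw [hsplit, Real.mul_rpow hD.le hy.le, mul_inv]

open Filter Topology in
lemma exists_mul_lt_mul_rpow {β K : ℝ} (hβ : β < 1) (hK : 0 < K) (L : ℝ) {ε : ℝ} (hε : 0 < ε) :
    ∃ w, 0 < w ∧ w < ε ∧ L * w < K * w ^ β := by
  have hlim : Tendsto (fun w : ℝ => L * w ^ (1 - β)) (𝓝[>] 0) (𝓝 0) := by
    have := ((Real.continuousAt_rpow_const 0 (1 - β) (Or.inr (by linarith))).tendsto.const_mul L)
    rw [Real.zero_rpow (by linarith), mul_zero] at this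
    exact this.mono_left nhdsWithin_le_nhds
  have hsmall : ∀ᶠ w in 𝓝[>] (0 : ℝ), w ∈ Set.Ioo 0 ε := Ioo_mem_nhdsGT hε
  obtain ⟨w, hwK, hw0, hwε⟩ := ((hlim.eventually_lt_const hK).and hsmall).exists
  refine ⟨w, hw0, hwε, ?_⟩
  calc L * w = L * w ^ (1 - β) * w ^ β := by
        rw [mul_assoc, ← Real.rpow_add hw0, sub_add_cancel, Real.rpow_one]
    _ < K * w ^ β := mul_lt_mul_of_pos_right hwK (Real.rpow_pos_of_pos hw0 β)

section Disc

open Metric Set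

variable {F : Type*} [NormedAddCommGroup F] [NormedSpace ℂ F] {g : ℂ → F} {ρ : ℝ}

lemma norm_le_div_of_mapsTo_ball (hg : DifferentiableOn ℂ g (ball 0 ρ))
    (hmaps : MapsTo g (ball 0 ρ) (ball 0 1)) (hg0 : g 0 = 0) {ζ : ℂ} (hζ : ‖ζ‖ < ρ) :
    ‖g ζ‖ ≤ ‖ζ‖ / ρ := by
  have := Complex.dist_le_div_mul_dist_of_mapsTo_ball hg
    (by rw [hg0]; exact hmaps.mono_right ball_subset_closedBall) (mem_ball_zero_iff.2 hζ)
  simpa [hg0, div_eq_inv_mul] using this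

lemma norm_le_norm_zero_add_of_mapsTo_ball (hg : DifferentiableOn ℂ g (ball 0 ρ))
    (hmaps : MapsTo g (ball 0 ρ) (ball 0 1)) {w : ℂ} (hw : ‖w‖ < ρ) :
    ‖g w‖ ≤ ‖g 0‖ + 2 * ‖w‖ / ρ := by
  have hg0 : ‖g 0‖ < 1 := mem_ball_zero_iff.1 (hmaps (mem_ball_self ((norm_nonneg w).trans_lt hw)))
  have hmaps' : MapsTo g (ball 0 ρ) (closedBall (g 0) 2) := fun v hv => by
    have := mem_ball_zero_iff.1 (hmaps hv)
    rw [mem_closedBall, dist_eq_norm]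
    linarith [norm_sub_le (g v) (g 0)]
  have hlip := Complex.dist_le_div_mul_dist_of_mapsTo_ball hg hmaps' (mem_ball_zero_iff.2 hw)
  rw [dist_zero_right, dist_eq_norm] at hlip
  calc ‖g w‖ ≤ ‖g 0‖ + ‖g w - g 0‖ := norm_le_norm_add_norm_sub' (g w) (g 0)
    _ ≤ ‖g 0‖ + 2 * ‖w‖ / ρ := by rw [mul_div_right_comm]; gcongr

end Disc

section Ellipsoid

variable {n : ℕ} {p : Fin n → ℝ} {z : Fin n → ℂ}

lemma sum_filter_le_eq_add (f : Fin n → ℝ) {s s' : ℕ} (h : s ≤ s') :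
    ∑ j ∈ univ.filter (fun j : Fin n => s ≤ (j : ℕ)), f j =
      ∑ j ∈ univ.filter (fun j : Fin n => s' ≤ (j : ℕ)), f j +
        ∑ j ∈ univ.filter (fun j : Fin n => s ≤ (j : ℕ) ∧ (j : ℕ) < s'), f j := by
  simp only [sum_filter, ← sum_add_distrib]
  refine sum_congr rfl fun j _ => ?_
  split_ifs <;> first | (exfalso; omega) | ring

lemma sum_filter_lt_eq_add (f : Fin n → ℝ) {s s' : ℕ} (h : s ≤ s') :
    ∑ j ∈ univ.filter (fun j : Fin n => (j : ℕ) < s'), f j =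
      ∑ j ∈ univ.filter (fun j : Fin n => (j : ℕ) < s), f j +
        ∑ j ∈ univ.filter (fun j : Fin n => s ≤ (j : ℕ) ∧ (j : ℕ) < s'), f j := by
  simp only [sum_filter, ← sum_add_distrib]
  refine sum_congr rfl fun j _ => ?_
  split_ifs <;> first | (exfalso; omega) | ring

lemma rr_eq_add_sum {s s' : ℕ} (h : s ≤ s') :
    rr p z s' = rr p z s +
      ∑ j ∈ univ.filter (fun j : Fin n => s ≤ (j : ℕ) ∧ (j : ℕ) < s'), ‖z j‖ ^ (2 * p j) := by
  unfold rr
  rw [sum_filter_le_eq_add _ h]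
  ring

lemma qq_eq_add_sum {s s' : ℕ} (h : s ≤ s') :
    qq p s' =
      qq p s + ∑ j ∈ univ.filter (fun j : Fin n => s ≤ (j : ℕ) ∧ (j : ℕ) < s'), (2 * p j)⁻¹ :=
  sum_filter_lt_eq_add _ h

lemma mem_ellipsoid_iff_rr_zero_pos : z ∈ ellipsoid p ↔ 0 < rr p z 0 := by
  simp [ellipsoid, rr]

-- Indices are `0`-based: these are the paper's coordinates `z₂, …, z_k`.
def MidLevel (p : Fin n → ℝ) (z : Fin n → ℂ) (k : ℕ) (c : ℝ) : Prop :=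
  ∀ j : Fin n, 1 ≤ (j : ℕ) → (j : ℕ) < k → p j * ‖z j‖ ^ (2 * p j) = c

lemma rr_eq_of_midLevel (hp : ∀ j, 0 < p j) {k : ℕ} {c : ℝ} (h : MidLevel p z k c) {s : ℕ}
    (h1 : 1 ≤ s) (hs : s ≤ k) : rr p z s = rr p z 1 + 2 * c * (qq p s - qq p 1) := by
  rw [rr_eq_add_sum h1, qq_eq_add_sum h1, add_sub_cancel_left, mul_sum]
  congr 1
  refine sum_congr rfl fun j hj => ?_
  rw [mem_filter] at hj
  rw [← h j hj.2.1 (by omega)]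
  field_simp [(hp j).ne']

-- The level `c = 1 / (2 q_k)` is the one with `c / p₁ = 1 - c ∑_{2 ≤ j ≤ k} 1 / p_j`, so the room
-- `slack p k` left to `z₁` and to the coordinates beyond `k` is exactly the bound on `r₁` in
-- `dd_eq_one`.
noncomputable def level (p : Fin n → ℝ) (k : ℕ) : ℝ := (2 * qq p k)⁻¹

variable [NeZero n]

lemma filter_val_lt_one : univ.filter (fun j : Fin n => (j : ℕ) < 1) = {0} := by
  ext j
  simp only [mem_filter, mem_univ, true_and, mem_singleton, Nat.lt_one_iff, Fin.val_eq_zero_iff]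

lemma qq_one : qq p 1 = (2 * p 0)⁻¹ := by
  rw [qq, filter_val_lt_one, sum_singleton]

lemma qq_pos_s5 (hp : ∀ j, 0 < p j) {k : ℕ} (hk : 1 ≤ k) : 0 < qq p k :=
  sum_pos (fun j _ => by have := hp j; positivity) ⟨0, by simp; omega⟩

lemma rr_one_eq_rr_zero_add : rr p z 1 = rr p z 0 + ‖z 0‖ ^ (2 * p 0) := by
  have h0 : univ.filter (fun j : Fin n => 0 ≤ (j : ℕ) ∧ (j : ℕ) < 1) = {0} := by
    ext j
    simp only [mem_filter, mem_univ, zero_le, true_and, mem_singleton, Nat.lt_one_iff,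
      Fin.val_eq_zero_iff]
  rw [rr_eq_add_sum (Nat.zero_le 1), h0, sum_singleton]

lemma norm_rpow_lt_rr_one (hz : z ∈ ellipsoid p) : ‖z 0‖ ^ (2 * p 0) < rr p z 1 := by
  rw [rr_one_eq_rr_zero_add]
  linarith [mem_ellipsoid_iff_rr_zero_pos.1 hz]

lemma dd_eq_one (hp : ∀ j, 0 < p j) {k : ℕ} (hk : 1 ≤ k) (hkn : k ≤ n) (hz : z ∈ ellipsoid p)
    {c : ℝ} (h : MidLevel p z k c) (hr : rr p z 1 < c / p 0) : dd p z k = 1 := by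
  suffices hset : {s : ℕ | 1 ≤ s ∧ s ≤ k ∧ ∀ hs : s - 1 < n,
      2 * p ⟨s - 1, hs⟩ * ‖z ⟨s - 1, hs⟩‖ ^ (2 * p ⟨s - 1, hs⟩) ≤ cc p z s} = {1} by
    rw [dd, hset, csSup_singleton]
  ext s
  simp only [Set.mem_ofPred_eq, Set.mem_singleton_iff]
  constructor
  · -- for `s ≥ 2` the condition reads `2 c q_s ≤ r_s`, while `2 c q_s - r_s = c / p₁ - r₁ > 0`
    rintro ⟨hs1, hsk, hcond⟩
    by_contra hs
    have hcond := hcond (by omega)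
    rw [mul_assoc, h _ (show 1 ≤ s - 1 by omega) (show s - 1 < k by omega), cc,
      le_div_iff₀ (qq_pos_s5 hp hs1), rr_eq_of_midLevel hp h hs1 hsk, qq_one] at hcond
    have hc : c / p 0 = 2 * c * (2 * p 0)⁻¹ := by field_simp [(hp 0).ne']
    linarith
  · rintro rfl
    refine ⟨le_rfl, hk, fun _ => ?_⟩
    have h0 : (⟨1 - 1, by omega⟩ : Fin n) = 0 := Fin.ext (by simp)
    rw [h0, cc, qq_one, div_inv_eq_mul]
    nlinarith [norm_rpow_lt_rr_one hz, hp 0]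

lemma RR_of_dd_eq_one (hp0 : 0 < p 0) {k : ℕ} (hdd : dd p z k = 1) (hr : 0 ≤ rr p z 1) :
    RR p z k = ‖z 0‖ * (rr p z 1 ^ (2 * p 0)⁻¹)⁻¹ := by
  rw [RR, hdd, filter_val_lt_one, prod_singleton, cc, qq_one, ← Real.inv_rpow hr]
  congr 2
  field_simp

lemma monIncr_of_midLevel {k : ℕ} {c : ℝ} (h : MidLevel p z k c)
    (h0 : p 0 * ‖z 0‖ ^ (2 * p 0) ≤ c) : monIncr p z k := by
  intro i j hjk hij
  rw [Fin.le_iff_val_le_val] at hij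
  by_cases hj : (j : ℕ) = 0
  · rw [show i = j from Fin.ext (by omega)]
  rw [h j (by omega) hjk]
  by_cases hi : (i : ℕ) = 0
  · rwa [show i = 0 from Fin.ext hi]
  · exact (h i (by omega) (by omega)).le

noncomputable def slack (p : Fin n → ℝ) (k : ℕ) : ℝ := level p k / p 0

lemma rr_one_eq_slack_add (hp : ∀ j, 0 < p j) {k : ℕ} (hk : 1 ≤ k)
    (h : MidLevel p z k (level p k)) : rr p z 1 = slack p k + rr p z k - 1 := by
  have hq := qq_pos_s5 hp hk
  rw [rr_eq_of_midLevel hp h hk le_rfl, slack, level, qq_one]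
  field_simp [(hp 0).ne']
  ring

end Ellipsoid

lemma mob_le {n : ℕ} {G A : Set (Fin n → ℂ)} {z : Fin n → ℂ} {b : ℝ} (hb : 0 ≤ b)
    (h : ∀ f : (Fin n → ℂ) → ℂ, DifferentiableOn ℂ f G → (∀ w ∈ G, ‖f w‖ < 1) →
      (∀ w ∈ A, f w = 0) → ‖f z‖ ≤ b) :
    mob G A z ≤ b :=
  Real.sSup_le (by rintro _ ⟨f, hf, hf1, hf0, rfl⟩; exact h f hf hf1 hf0) hb

noncomputable def testPoint {n : ℕ} (p : Fin n → ℝ) (k : ℕ) (j₀ : Fin n) (ζ w : ℂ) :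
    Fin n → ℂ := fun j =>
  if (j : ℕ) = 0 then ζ
  else if (j : ℕ) < k then (((level p k / p j) ^ (2 * p j)⁻¹ : ℝ) : ℂ)
  else if j = j₀ then w else 0

section TestPoint

variable {n : ℕ} {p : Fin n → ℝ} {k : ℕ} {j₀ : Fin n} {ζ w : ℂ}

lemma differentiable_testPoint_left : Differentiable ℂ (fun ζ => testPoint p k j₀ ζ w) :=
  differentiable_pi.2 fun j => by unfold testPoint; split_ifs <;> fun_prop

lemma differentiable_testPoint_right : Differentiable ℂ (testPoint p k j₀ ζ) :=
  differentiable_pi.2 fun j => by unfold testPoint; split_ifs <;> fun_prop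

lemma rr_testPoint (hp : ∀ j, 0 < p j) (hk : 1 ≤ k) (hkj₀ : k ≤ j₀) :
    rr p (testPoint p k j₀ ζ w) k = 1 - ‖w‖ ^ (2 * p j₀) := by
  unfold rr
  rw [sum_eq_single_of_mem j₀ (by simp [hkj₀])]
  · simp [testPoint, show (j₀ : ℕ) ≠ 0 by omega, show ¬ (j₀ : ℕ) < k by omega]
  · intro j hj hne
    rw [mem_filter] at hj
    simp only [testPoint, if_neg (show (j : ℕ) ≠ 0 by omega),
      if_neg (show ¬ (j : ℕ) < k by omega), if_neg hne, norm_zero]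
    exact Real.zero_rpow (by have := hp j; positivity)

variable [NeZero n]

lemma testPoint_zero : testPoint p k j₀ ζ w 0 = ζ := by simp [testPoint]

lemma level_pos (hp : ∀ j, 0 < p j) (hk : 1 ≤ k) : 0 < level p k := by
  have := qq_pos_s5 hp hk
  unfold level
  positivity

lemma slack_pos (hp : ∀ j, 0 < p j) (hk : 1 ≤ k) : 0 < slack p k :=
  div_pos (level_pos hp hk) (hp 0)

lemma midLevel_testPoint (hp : ∀ j, 0 < p j) (hk : 1 ≤ k) :
    MidLevel p (testPoint p k j₀ ζ w) k (level p k) := by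
  intro j hj hjk
  have hpj := hp j
  simp only [testPoint, if_neg (show (j : ℕ) ≠ 0 by omega), if_pos hjk]
  rw [Complex.norm_of_nonneg (by have := level_pos hp hk; positivity),
    Real.rpow_inv_rpow (by have := level_pos hp hk; positivity) (by positivity)]
  field_simp

lemma rr_one_testPoint (hp : ∀ j, 0 < p j) (hk : 1 ≤ k) (hkj₀ : k ≤ j₀) :
    rr p (testPoint p k j₀ ζ w) 1 = slack p k - ‖w‖ ^ (2 * p j₀) := by
  rw [rr_one_eq_slack_add hp hk (midLevel_testPoint hp hk), rr_testPoint hp hk hkj₀]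
  ring

lemma testPoint_mem_ellipsoid (hp : ∀ j, 0 < p j) (hk : 1 ≤ k) (hkj₀ : k ≤ j₀)
    (h : ‖ζ‖ ^ (2 * p 0) + ‖w‖ ^ (2 * p j₀) < slack p k) :
    testPoint p k j₀ ζ w ∈ ellipsoid p := by
  have := rr_one_eq_rr_zero_add (p := p) (z := testPoint p k j₀ ζ w)
  rw [rr_one_testPoint hp hk hkj₀, testPoint_zero] at this
  rw [mem_ellipsoid_iff_rr_zero_pos]
  linarith

lemma testPoint_mem_zeroSet (hp : ∀ j, 0 < p j) (hk : 1 ≤ k) (hkj₀ : k ≤ j₀)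
    (h : ‖w‖ ^ (2 * p j₀) < slack p k) : testPoint p k j₀ 0 w ∈ zeroSet p k := by
  refine ⟨testPoint_mem_ellipsoid hp hk hkj₀ ?_, prod_eq_zero (i := 0) ?_ testPoint_zero⟩
  · rwa [norm_zero, Real.zero_rpow (by have := hp 0; positivity), zero_add]
  · simp only [mem_filter, mem_univ, true_and, Fin.val_zero]
    omega

lemma monIncr_testPoint (hp : ∀ j, 0 < p j) (hk : 1 ≤ k) (hkj₀ : k ≤ j₀)
    (hz : testPoint p k j₀ ζ w ∈ ellipsoid p) : monIncr p (testPoint p k j₀ ζ w) k := by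
  refine monIncr_of_midLevel (midLevel_testPoint hp hk) ?_
  have h0 := norm_rpow_lt_rr_one hz
  rw [rr_one_testPoint hp hk hkj₀] at h0
  have hw : 0 ≤ ‖w‖ ^ (2 * p j₀) := by positivity
  have hslack : p 0 * slack p k = level p k := by rw [slack]; field_simp [(hp 0).ne']
  nlinarith [hp 0]

lemma RR_testPoint (hp : ∀ j, 0 < p j) (hk : 1 ≤ k) (hkn : k ≤ n) (hkj₀ : k ≤ j₀)
    (hz : testPoint p k j₀ ζ w ∈ ellipsoid p) (hw : w ≠ 0) :
    RR p (testPoint p k j₀ ζ w) k =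
      ‖ζ‖ * ((slack p k - ‖w‖ ^ (2 * p j₀)) ^ (2 * p 0)⁻¹)⁻¹ := by
  have hr := rr_one_testPoint (ζ := ζ) (w := w) hp hk hkj₀
  have hw' : 0 < ‖w‖ ^ (2 * p j₀) := by have := norm_pos_iff.2 hw; positivity
  have hdd := dd_eq_one hp hk hkn hz (midLevel_testPoint hp hk) (by rw [hr, ← slack]; linarith)
  have hr0 := (Real.rpow_nonneg (norm_nonneg _) _).trans (norm_rpow_lt_rr_one hz).le
  rw [RR_of_dd_eq_one (hp 0) hdd hr0, testPoint_zero, hr]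

open Metric in
lemma mob_testPoint_le (hp : ∀ j, 0 < p j) (hk : 1 ≤ k) (hkj₀ : k ≤ j₀) {t ρ : ℝ} (ht : 0 ≤ t)
    (hρ : 0 < ρ) (htρ : t ^ (2 * p 0) + ρ ^ (2 * p j₀) ≤ slack p k) {w : ℂ} (hw : ‖w‖ < ρ) :
    mob (ellipsoid p) (zeroSet p k) (testPoint p k j₀ t w) ≤
      t * (slack p k ^ (2 * p 0)⁻¹)⁻¹ + 2 * ‖w‖ / ρ := by
  have hp0 : 0 < 2 * p 0 := by linarith [hp 0]
  have hpj₀ : 0 < 2 * p j₀ := by linarith [hp j₀]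
  have hD := slack_pos hp hk
  have hρβ : 0 < ρ ^ (2 * p j₀) := Real.rpow_pos_of_pos hρ _
  have hdisc₁ : Set.MapsTo (fun ζ => testPoint p k j₀ ζ 0) (ball 0 (slack p k ^ (2 * p 0)⁻¹))
      (ellipsoid p) := fun ζ hζ => by
    refine testPoint_mem_ellipsoid hp hk hkj₀ ?_
    rw [mem_ball_zero_iff, Real.lt_rpow_inv_iff_of_pos (norm_nonneg _) hD.le hp0] at hζ
    rwa [norm_zero, Real.zero_rpow hpj₀.ne', add_zero]
  have hdisc₂ : Set.MapsTo (testPoint p k j₀ t) (ball 0 ρ) (ellipsoid p) := fun w hw => by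
    refine testPoint_mem_ellipsoid hp hk hkj₀ ?_
    rw [Complex.norm_of_nonneg ht]
    have := Real.rpow_lt_rpow (norm_nonneg w) (mem_ball_zero_iff.1 hw) hpj₀
    linarith
  refine mob_le (by positivity) fun f hf hf1 hf0 => ?_
  have hmaps : Set.MapsTo f (ellipsoid p) (ball 0 1) := fun v hv => mem_ball_zero_iff.2 (hf1 v hv)
  have hschwarz : ‖f (testPoint p k j₀ t 0)‖ ≤ t / slack p k ^ (2 * p 0)⁻¹ := by
    have ht' : ‖(t : ℂ)‖ < slack p k ^ (2 * p 0)⁻¹ := by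
      rw [Complex.norm_of_nonneg ht, Real.lt_rpow_inv_iff_of_pos ht hD.le hp0]
      linarith
    simpa [abs_of_nonneg ht] using norm_le_div_of_mapsTo_ball
      (hf.comp differentiable_testPoint_left.differentiableOn hdisc₁) (hmaps.comp hdisc₁)
      (hf0 _ (testPoint_mem_zeroSet hp hk hkj₀ (by rwa [norm_zero, Real.zero_rpow hpj₀.ne']))) ht'
  have hlip := norm_le_norm_zero_add_of_mapsTo_ball
    (hf.comp differentiable_testPoint_right.differentiableOn hdisc₂) (hmaps.comp hdisc₂) hw
  simp only [Function.comp_apply] at hlip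
  rw [← div_eq_mul_inv]
  linarith

end TestPoint

theorem stmt5_general (n k : ℕ) (hk1 : 1 ≤ k) (hkn : k ≤ n)
    (p : Fin n → ℝ) (hp : ∀ j, 0 < p j)
    (hj : ∃ j : Fin n, k ≤ (j : ℕ) ∧ p j < 1 / 2) :
    ∃ z ∈ ellipsoid p, monIncr p z k ∧
      mob (ellipsoid p) (zeroSet p k) z < RR p z k := by
  obtain ⟨j₀, hkj₀, hpj₀⟩ := hj
  have : NeZero n := ⟨by omega⟩
  set D := slack p k
  set α := (2 * p 0)⁻¹
  set β := 2 * p j₀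
  have hD : 0 < D := slack_pos hp hk1
  have hp0 := hp 0
  have hα : 0 < α := by positivity
  have hβ : 0 < β := by linarith [hp j₀]
  obtain ⟨t, ht0, ht⟩ : ∃ t : ℝ, 0 < t ∧ t ^ (2 * p 0) = D / 2 :=
    ⟨(D / 2) ^ α, by positivity, Real.rpow_inv_rpow (by positivity) (by positivity)⟩
  obtain ⟨ρ, hρ0, hρ⟩ : ∃ ρ : ℝ, 0 < ρ ∧ ρ ^ β = D / 2 :=
    ⟨(D / 2) ^ β⁻¹, by positivity, Real.rpow_inv_rpow (by positivity) hβ.ne'⟩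
  obtain ⟨w, hw0, hwρ, hw⟩ := exists_mul_lt_mul_rpow (by linarith : β < 1)
    (by positivity : 0 < t * (α * (D ^ α)⁻¹ * D⁻¹)) (2 / ρ) hρ0
  have hwβ : w ^ β < D / 2 := hρ ▸ Real.rpow_lt_rpow hw0.le hwρ hβ
  have hz : testPoint p k j₀ t w ∈ ellipsoid p := testPoint_mem_ellipsoid hp hk1 hkj₀
    (by rw [Complex.norm_of_nonneg (by positivity), Complex.norm_of_nonneg hw0.le]; linarith)
  refine ⟨_, hz, monIncr_testPoint hp hk1 hkj₀ hz, ?_⟩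
  rw [RR_testPoint hp hk1 hkn hkj₀ hz (by exact_mod_cast hw0.ne'),
    Complex.norm_of_nonneg (by positivity), Complex.norm_of_nonneg hw0.le]
  calc mob (ellipsoid p) (zeroSet p k) (testPoint p k j₀ t w)
      ≤ t * (D ^ α)⁻¹ + 2 * ‖(w : ℂ)‖ / ρ := mob_testPoint_le hp hk1 hkj₀ ht0.le hρ0
        (by linarith) (by rwa [Complex.norm_of_nonneg hw0.le])
    _ = t * (D ^ α)⁻¹ + 2 / ρ * w := by rw [Complex.norm_of_nonneg hw0.le]; ring
    _ < t * ((D ^ α)⁻¹ + α * (D ^ α)⁻¹ * D⁻¹ * w ^ β) := by linarith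
    _ ≤ t * ((D - w ^ β) ^ α)⁻¹ := by
        gcongr
        exact inv_rpow_add_le_inv_rpow_sub hD (by linarith) hα.le

/-- Theorem 1(d): if some `p_j < 1/2` with `j ∈ {k+1,…,n}`, then the Möbius and
Green functions differ, i.e. there is `z ∈ 𝔼` (with the required monotonicity)
such that `m_𝔼(A,z) < R(z) = g_𝔼(A,z)`. -/
theorem stmt5 (n k : ℕ) (hn : 2 ≤ n) (hk1 : 1 ≤ k) (hkn : k ≤ n)
    (p : Fin n → ℝ) (hp : ∀ j, 0 < p j)
    (hj : ∃ j : Fin n, k ≤ (j : ℕ) ∧ p j < 1 / 2) :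
    ∃ z ∈ ellipsoid p, monIncr p z k ∧
      mob (ellipsoid p) (zeroSet p k) z < RR p z k :=
  stmt5_general n k hk1 hkn p hp hj
end

section
/- (Proposition b.) Let n ≥ 2, p_1,…,p_n > 0, 1 ≤ k ≤ n, and let z ∈ 𝔼 with (p_j|z_j|^{2p_j})_{j=1}^k monotonically increasing, z_j ≠ 0 for j = 1,…,d, and d < n. Assume p_j ≥ 1/2 for j = d+1,…,n. Then there exists h : 𝔼' → ℂ holomorphic, h ≢ 0, with h(ζ) = 0 whenever ζ_{d+1}⋯ζ_k = 0 (a vacuous condition if d = k), such that ζ ↦ |h(ζ)| · r_d(ζ)^{q_d} attains its maximum over 𝔼' at the point (z_{d+1},…,z_n). -/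
/-!
The extremal function is `h(ζ) = ∏_{d < j ≤ k} ζ_j · exp (∑_j b_j ζ_j)`. The tangent line of `log`
at `R = r_d(z)` gives `r ^ q ≤ R ^ q · exp (μ (r - R))` with `μ = q_d / R`, which bounds
`|h| · r_d ^ q` by a constant times a product of one-variable functions
`|u| ^ m · exp (Re (b u) - μ |u| ^ (2p))`. With `b_j` as in `peakCoeff`, each factor peaks at
`u = z_j` by Bernoulli's inequality (`2p_j ≥ 1`), provided `m_j ≤ 2p_j μ |z_j| ^ (2p_j)`. For
`d < j ≤ k`, where `m_j = 1`, this is the maximality of `d` together with the monotonicity of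
`p_j |z_j| ^ (2p_j)`.
-/

open Finset

theorem pow_mul_exp_sub_rpow_le {a μ s r : ℝ} (m : ℕ) (ha : 1 ≤ a) (hμ : 0 ≤ μ) (hs : 0 < s)
    (hr : 0 ≤ r) :
    r ^ m * Real.exp ((a * μ * s ^ a - m) / s * r - μ * r ^ a) ≤
      s ^ m * Real.exp (a * μ * s ^ a - m - μ * s ^ a) := by
  have hratio : r ^ m ≤ s ^ m * Real.exp (m * (r / s - 1)) := by
    have h : r / s ≤ Real.exp (r / s - 1) := by linarith [Real.add_one_le_exp (r / s - 1)]
    calc r ^ m = s ^ m * (r / s) ^ m := by rw [div_pow, mul_div_cancel₀ _ (by positivity)]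
      _ ≤ s ^ m * Real.exp (r / s - 1) ^ m := by gcongr
      _ = s ^ m * Real.exp (m * (r / s - 1)) := by rw [Real.exp_nat_mul]
  have hbernoulli : a * (r / s - 1) * s ^ a ≤ r ^ a - s ^ a := by
    have hx : -1 ≤ r / s - 1 := by linarith [div_nonneg hr hs.le]
    have h := one_add_mul_self_le_rpow_one_add hx ha
    rw [add_sub_cancel, Real.div_rpow hr hs.le, le_div_iff₀ (by positivity)] at h
    linarith
  have hexponent : m * (r / s - 1) + ((a * μ * s ^ a - m) / s * r - μ * r ^ a) ≤
      a * μ * s ^ a - m - μ * s ^ a := by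
    have e : (a * μ * s ^ a - m) / s * r = (a * μ * s ^ a - m) * (r / s) := by ring
    rw [e]
    linear_combination μ * hbernoulli
  calc r ^ m * Real.exp ((a * μ * s ^ a - m) / s * r - μ * r ^ a)
      ≤ s ^ m * Real.exp (m * (r / s - 1)) *
          Real.exp ((a * μ * s ^ a - m) / s * r - μ * r ^ a) := by
        gcongr
    _ = s ^ m * Real.exp (m * (r / s - 1) + ((a * μ * s ^ a - m) / s * r - μ * r ^ a)) := by
        rw [Real.exp_add, mul_assoc]
    _ ≤ s ^ m * Real.exp (a * μ * s ^ a - m - μ * s ^ a) := by gcongr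

/-- Chosen so that `u ↦ ‖u‖ ^ m * exp (re (b * u) - μ * ‖u‖ ^ a)` is maximal at `u = w`: its
direction is that of `conj w`, and its modulus solves the radial critical-point equation
at `‖w‖`. -/
noncomputable def peakCoeff (a μ : ℝ) (m : ℕ) (w : ℂ) : ℂ :=
  ((a * μ * ‖w‖ ^ a - m) / ‖w‖ ^ 2 : ℝ) * (starRingEnd ℂ) w

theorem norm_peakCoeff {a μ : ℝ} {m : ℕ} {w : ℂ} (hm : (m : ℝ) ≤ a * μ * ‖w‖ ^ a) :
    ‖peakCoeff a μ m w‖ = (a * μ * ‖w‖ ^ a - m) / ‖w‖ := by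
  rcases eq_or_ne w 0 with rfl | hw
  · simp [peakCoeff]
  rw [peakCoeff, norm_mul, Complex.norm_real, Complex.norm_conj, Real.norm_eq_abs,
    abs_of_nonneg (by positivity [sub_nonneg.2 hm])]
  field_simp [norm_ne_zero_iff.2 hw]

theorem re_peakCoeff_mul_self {a μ : ℝ} {m : ℕ} {w : ℂ} (hw : w ≠ 0) :
    (peakCoeff a μ m w * w).re = a * μ * ‖w‖ ^ a - m := by
  rw [peakCoeff, mul_assoc, mul_comm ((starRingEnd ℂ) w), Complex.mul_conj,
    Complex.normSq_eq_norm_sq, ← Complex.ofReal_mul, Complex.ofReal_re,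
    div_mul_cancel₀ _ (by positivity)]

theorem norm_pow_mul_exp_peakCoeff_le {a μ : ℝ} {m : ℕ} {w : ℂ} (ha : 1 ≤ a) (hμ : 0 ≤ μ)
    (hm : (m : ℝ) ≤ a * μ * ‖w‖ ^ a) (u : ℂ) :
    ‖u‖ ^ m * Real.exp ((peakCoeff a μ m w * u).re - μ * ‖u‖ ^ a) ≤
      ‖w‖ ^ m * Real.exp ((peakCoeff a μ m w * w).re - μ * ‖w‖ ^ a) := by
  rcases eq_or_ne w 0 with rfl | hw
  · obtain rfl : m = 0 := by
      simpa [Real.zero_rpow (by linarith : a ≠ 0)] using hm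
    have hb : peakCoeff a μ 0 0 = 0 := by simp [peakCoeff]
    simp only [hb, zero_mul, Complex.zero_re, norm_zero, Real.zero_rpow (by linarith : a ≠ 0),
      mul_zero, sub_zero, zero_sub, Real.exp_zero, pow_zero, one_mul, Real.exp_le_one_iff,
      neg_nonpos]
    positivity
  have hre : (peakCoeff a μ m w * u).re ≤ (a * μ * ‖w‖ ^ a - m) / ‖w‖ * ‖u‖ := by
    rw [← norm_peakCoeff hm, ← norm_mul]
    exact Complex.re_le_norm _
  calc ‖u‖ ^ m * Real.exp ((peakCoeff a μ m w * u).re - μ * ‖u‖ ^ a)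
      ≤ ‖u‖ ^ m * Real.exp ((a * μ * ‖w‖ ^ a - m) / ‖w‖ * ‖u‖ - μ * ‖u‖ ^ a) := by gcongr
    _ ≤ ‖w‖ ^ m * Real.exp (a * μ * ‖w‖ ^ a - m - μ * ‖w‖ ^ a) :=
        pow_mul_exp_sub_rpow_le m ha hμ (norm_pos_iff.2 hw) (norm_nonneg u)
    _ = _ := by rw [re_peakCoeff_mul_self hw]

theorem rpow_le_rpow_mul_exp {y R Q : ℝ} (hy : 0 ≤ y) (hR : 0 < R) (hQ : 0 ≤ Q) :
    y ^ Q ≤ R ^ Q * Real.exp (Q / R * (y - R)) := by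
  have h : y ≤ R * Real.exp ((y - R) / R) := by
    have := Real.add_one_le_exp ((y - R) / R)
    rw [div_add_one hR.ne', sub_add_cancel, div_le_iff₀' hR] at this
    exact this
  calc y ^ Q ≤ (R * Real.exp ((y - R) / R)) ^ Q := by gcongr
    _ = R ^ Q * Real.exp (Q / R * (y - R)) := by
      rw [Real.mul_rpow hR.le (Real.exp_nonneg _), ← Real.exp_mul]
      ring_nf

section PeakFunction

variable {ι : Type*} [Fintype ι]

noncomputable def peakFunction (a : ι → ℝ) (μ : ℝ) (m : ι → ℕ) (w ζ : ι → ℂ) : ℂ :=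
  (∏ j, ζ j ^ m j) * Complex.exp (∑ j, peakCoeff (a j) μ (m j) (w j) * ζ j)

noncomputable def defect (a : ι → ℝ) (ζ : ι → ℂ) : ℝ :=
  1 - ∑ j, ‖ζ j‖ ^ a j

theorem differentiable_peakFunction (a : ι → ℝ) (μ : ℝ) (m : ι → ℕ) (w : ι → ℂ) :
    Differentiable ℂ (peakFunction a μ m w) := by
  unfold peakFunction
  fun_prop

theorem peakFunction_self_ne_zero {a : ι → ℝ} {μ : ℝ} {m : ι → ℕ} {w : ι → ℂ}
    (ha : ∀ j, a j ≠ 0) (hm : ∀ j, (m j : ℝ) ≤ a j * μ * ‖w j‖ ^ a j) :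
    peakFunction a μ m w w ≠ 0 := by
  refine mul_ne_zero (prod_ne_zero_iff.2 fun j _ => ?_) (Complex.exp_ne_zero _)
  rcases eq_or_ne (w j) 0 with hwj | hwj
  · have := hm j
    rw [hwj, norm_zero, Real.zero_rpow (ha j), mul_zero, Nat.cast_nonpos] at this
    simp [this]
  · exact pow_ne_zero _ hwj

theorem norm_peakFunction_mul_exp_defect (a : ι → ℝ) (μ : ℝ) (m : ι → ℕ) (w ζ : ι → ℂ) :
    ‖peakFunction a μ m w ζ‖ * Real.exp (μ * defect a ζ) = Real.exp μ *
      ∏ j, ‖ζ j‖ ^ m j * Real.exp ((peakCoeff (a j) μ (m j) (w j) * ζ j).re - μ * ‖ζ j‖ ^ a j) := by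
  rw [peakFunction, defect, norm_mul, norm_prod, Complex.norm_exp, Complex.re_sum,
    prod_mul_distrib, ← Real.exp_sum, sum_sub_distrib, ← mul_sum]
  simp only [norm_pow]
  rw [mul_one_sub, Real.exp_sub, Real.exp_sub]
  ring

theorem norm_peakFunction_mul_exp_defect_le {a : ι → ℝ} {μ : ℝ} {m : ι → ℕ} {w : ι → ℂ}
    (ha : ∀ j, 1 ≤ a j) (hμ : 0 ≤ μ) (hm : ∀ j, (m j : ℝ) ≤ a j * μ * ‖w j‖ ^ a j)
    (ζ : ι → ℂ) :
    ‖peakFunction a μ m w ζ‖ * Real.exp (μ * defect a ζ) ≤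
      ‖peakFunction a μ m w w‖ * Real.exp (μ * defect a w) := by
  rw [norm_peakFunction_mul_exp_defect, norm_peakFunction_mul_exp_defect]
  exact mul_le_mul_of_nonneg_left (prod_le_prod (fun j _ => by positivity)
    fun j _ => norm_pow_mul_exp_peakCoeff_le (ha j) hμ (hm j) (ζ j)) (Real.exp_nonneg μ)

theorem norm_peakFunction_mul_defect_rpow_le {a : ι → ℝ} {m : ι → ℕ}
    {Q : ℝ} {w ζ : ι → ℂ} (ha : ∀ j, 1 ≤ a j) (hQ : 0 ≤ Q) (hw : 0 < defect a w)
    (hζ : 0 ≤ defect a ζ) (hm : ∀ j, (m j : ℝ) ≤ a j * (Q / defect a w) * ‖w j‖ ^ a j) :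
    ‖peakFunction a (Q / defect a w) m w ζ‖ * defect a ζ ^ Q ≤
      ‖peakFunction a (Q / defect a w) m w w‖ * defect a w ^ Q := by
  set R := defect a w
  set μ := Q / R
  have hle := norm_peakFunction_mul_exp_defect_le ha (by positivity) hm ζ
  calc ‖peakFunction a μ m w ζ‖ * defect a ζ ^ Q
      ≤ ‖peakFunction a μ m w ζ‖ * (R ^ Q * Real.exp (μ * (defect a ζ - R))) := by
        gcongr
        exact rpow_le_rpow_mul_exp hζ hw hQ
    _ = R ^ Q * Real.exp (-(μ * R)) *
          (‖peakFunction a μ m w ζ‖ * Real.exp (μ * defect a ζ)) := by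
        rw [mul_sub, sub_eq_add_neg, Real.exp_add]; ring
    _ ≤ R ^ Q * Real.exp (-(μ * R)) * (‖peakFunction a μ m w w‖ * Real.exp (μ * R)) := by
        gcongr
    _ = ‖peakFunction a μ m w w‖ * R ^ Q := by
        rw [Real.exp_neg]; field_simp

end PeakFunction

section MaximalIndex

variable {n : ℕ} {p : Fin n → ℝ} {z : Fin n → ℂ}

theorem filter_val_lt_succ_eq_insert {s : ℕ} (hs : s < n) :
    univ.filter (fun j : Fin n => (j : ℕ) < s + 1) =
      insert ⟨s, hs⟩ (univ.filter fun j : Fin n => (j : ℕ) < s) := by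
  ext j
  simp only [Order.lt_add_one_iff, mem_filter, mem_univ, true_and, mem_insert, Fin.ext_iff]
  omega

theorem filter_le_val_eq_insert {s : ℕ} (hs : s < n) :
    univ.filter (fun j : Fin n => s ≤ (j : ℕ)) =
      insert ⟨s, hs⟩ (univ.filter fun j : Fin n => s + 1 ≤ (j : ℕ)) := by
  ext j
  simp only [mem_filter, mem_univ, true_and, Order.add_one_le_iff, mem_insert, Fin.ext_iff]
  omega

theorem qq_succ {s : ℕ} (hs : s < n) : qq p (s + 1) = qq p s + (2 * p ⟨s, hs⟩)⁻¹ := by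
  rw [qq, qq, filter_val_lt_succ_eq_insert hs, sum_insert (by simp), add_comm]

theorem rr_succ {s : ℕ} (hs : s < n) :
    rr p z (s + 1) = rr p z s + ‖z ⟨s, hs⟩‖ ^ (2 * p ⟨s, hs⟩) := by
  rw [rr, rr, filter_le_val_eq_insert hs, sum_insert (by simp)]
  ring

theorem qq_nonneg (hp : ∀ j, 0 ≤ p j) (s : ℕ) : 0 ≤ qq p s :=
  sum_nonneg fun j _ => inv_nonneg.2 (mul_nonneg zero_le_two (hp j))

theorem rr_pos (hz : z ∈ ellipsoid p) (s : ℕ) : 0 < rr p z s := by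
  have : ∑ j ∈ univ.filter (fun j : Fin n => s ≤ (j : ℕ)), ‖z j‖ ^ (2 * p j) < 1 :=
    (sum_le_sum_of_subset_of_nonneg (subset_univ _) fun _ _ _ => by positivity).trans_lt hz
  rw [rr]; linarith

theorem le_dd {k s : ℕ} (hs1 : 1 ≤ s) (hsk : s ≤ k)
    (hs : ∀ h : s - 1 < n,
      2 * p ⟨s - 1, h⟩ * ‖z ⟨s - 1, h⟩‖ ^ (2 * p ⟨s - 1, h⟩) ≤ cc p z s) :
    s ≤ dd p z k :=
  le_csSup ⟨k, fun _ h => h.2.1⟩ ⟨hs1, hsk, hs⟩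

theorem rr_lt_of_dd_lt {k : ℕ} (hp : ∀ j, 0 < p j) (hDk : dd p z k < k) (hDn : dd p z k < n) :
    rr p z (dd p z k) <
      2 * p ⟨dd p z k, hDn⟩ * ‖z ⟨dd p z k, hDn⟩‖ ^ (2 * p ⟨dd p z k, hDn⟩) * qq p (dd p z k) := by
  set t := ‖z ⟨dd p z k, hDn⟩‖ ^ (2 * p ⟨dd p z k, hDn⟩)
  have hcc : cc p z (dd p z k + 1) < 2 * p ⟨dd p z k, hDn⟩ * t := by
    by_contra! hle
    have := le_dd (s := dd p z k + 1) (by omega) hDk fun _ => by simpa using hle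
    omega
  have hpD := hp ⟨dd p z k, hDn⟩
  have hq : 0 < qq p (dd p z k) + (2 * p ⟨dd p z k, hDn⟩)⁻¹ :=
    add_pos_of_nonneg_of_pos (qq_nonneg (fun j => (hp j).le) _) (by positivity)
  have ht : 2 * p ⟨dd p z k, hDn⟩ * t * (2 * p ⟨dd p z k, hDn⟩)⁻¹ = t := by field_simp
  rw [cc, qq_succ hDn, rr_succ hDn, div_lt_iff₀ hq, mul_add, ht] at hcc
  linarith

theorem one_le_mul_qq_div_rr {k : ℕ} (hp : ∀ j, 0 < p j) (hz : z ∈ ellipsoid p)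
    (hmon : monIncr p z k) (i : Fin n) (hDi : dd p z k ≤ i) (hik : (i : ℕ) < k) :
    1 ≤ 2 * p i * (qq p (dd p z k) / rr p z (dd p z k)) * ‖z i‖ ^ (2 * p i) := by
  have hDn : dd p z k < n := hDi.trans_lt i.isLt
  have hlt := rr_lt_of_dd_lt hp (hDi.trans_lt hik) hDn
  have hmono := hmon ⟨dd p z k, hDn⟩ i hik hDi
  rw [mul_div_assoc', div_mul_eq_mul_div, one_le_div (rr_pos hz _)]
  nlinarith [qq_nonneg (fun j => (hp j).le) (dd p z k)]

end MaximalIndex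

section Restriction

variable {n : ℕ} {D : ℕ}

theorem pshift_apply (p : Fin n → ℝ) (j : Fin (n - D)) :
    pshift p D j = p ⟨D + j, by omega⟩ :=
  dif_pos _

theorem zrest_apply (z : Fin n → ℂ) (j : Fin (n - D)) :
    zrest z D j = z ⟨D + j, by omega⟩ :=
  dif_pos _

theorem sum_shift_eq_sum_filter_le (f : Fin n → ℝ) :
    ∑ j : Fin (n - D), f ⟨D + j, by omega⟩ =
      ∑ i ∈ univ.filter (fun i : Fin n => D ≤ (i : ℕ)), f i :=
  sum_bij' (fun j _ => ⟨D + j, by omega⟩)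
    (fun i hi => ⟨i - D, by have := (mem_filter.1 hi).2; omega⟩)
    (fun _ _ => mem_filter.2 ⟨mem_univ _, Nat.le_add_right _ _⟩) (fun _ _ => mem_univ _)
    (fun _ _ => Fin.ext (Nat.add_sub_cancel_left ..))
    (fun _ hi => Fin.ext (Nat.add_sub_cancel' (mem_filter.1 hi).2)) (fun _ _ => rfl)

theorem rrest_zrest (p : Fin n → ℝ) (z : Fin n → ℂ) : rrest p D (zrest z D) = rr p z D := by
  rw [rrest, rr, ← sum_shift_eq_sum_filter_le]
  simp only [pshift_apply, zrest_apply]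

end Restriction

theorem stmt11_general (n k : ℕ)
    (p : Fin n → ℝ) (hp : ∀ j, 0 < p j)
    (z : Fin n → ℂ) (hz : z ∈ ellipsoid p) (hmon : monIncr p z k)
    (hp' : ∀ j : Fin n, dd p z k ≤ (j : ℕ) → (1 : ℝ) / 2 ≤ p j) :
    ∃ h : (Fin (n - dd p z k) → ℂ) → ℂ,
      DifferentiableOn ℂ h (ellipsoid (pshift p (dd p z k))) ∧
      (∃ ζ ∈ ellipsoid (pshift p (dd p z k)), h ζ ≠ 0) ∧
      (∀ ζ ∈ ellipsoid (pshift p (dd p z k)),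
        (∏ j ∈ univ.filter (fun j : Fin (n - dd p z k) => dd p z k + (j : ℕ) < k), ζ j) = 0 →
          h ζ = 0) ∧
      (∀ ζ ∈ ellipsoid (pshift p (dd p z k)),
        ‖h ζ‖ * rrest p (dd p z k) ζ ^ qq p (dd p z k) ≤
          ‖h (zrest z (dd p z k))‖ *
            rrest p (dd p z k) (zrest z (dd p z k)) ^ qq p (dd p z k)) := by
  set D := dd p z k
  set a : Fin (n - D) → ℝ := fun j => 2 * pshift p D j
  set m : Fin (n - D) → ℕ := fun j => if D + (j : ℕ) < k then 1 else 0
  set w := zrest z D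
  have ha : ∀ j, 1 ≤ a j := fun j => by
    have := hp' ⟨D + j, by omega⟩ (Nat.le_add_right _ _)
    simp only [a, pshift_apply]; linarith
  have hw : defect a w = rr p z D := rrest_zrest p z
  have hm : ∀ j, (m j : ℝ) ≤ a j * (qq p D / defect a w) * ‖w j‖ ^ a j := fun j => by
    rw [hw]
    by_cases hj : D + (j : ℕ) < k
    · simpa only [m, a, w, if_pos hj, pshift_apply, zrest_apply, Nat.cast_one] using
        one_le_mul_qq_div_rr hp hz hmon ⟨D + j, by omega⟩ (Nat.le_add_right _ _) hj
    · simp only [m, if_neg hj, Nat.cast_zero]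
      exact mul_nonneg (mul_nonneg (by linarith [ha j])
        (div_nonneg (qq_nonneg (fun j => (hp j).le) D) (rr_pos hz D).le)) (by positivity)
  have hw_pos : 0 < defect a w := hw ▸ rr_pos hz D
  refine ⟨peakFunction a (qq p D / defect a w) m w,
    (differentiable_peakFunction _ _ _ _).differentiableOn,
    ⟨w, sub_pos.1 hw_pos, peakFunction_self_ne_zero (fun j => by linarith [ha j]) hm⟩,
    fun ζ _ hζ => ?_,
    fun ζ hζ => norm_peakFunction_mul_defect_rpow_le ha (qq_nonneg (fun j => (hp j).le) D)
      hw_pos (sub_nonneg.2 hζ.le) hm⟩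
  have : ∏ j, ζ j ^ m j = 0 := by
    rw [← hζ, prod_filter]
    simp only [m, pow_ite, pow_one, pow_zero]
  rw [peakFunction, this, zero_mul]

/-- Proposition b: if `p_j ≥ 1/2` for `j = d+1,…,n`, an extremal `h` on `𝔼'`
as in Lemma max(b) exists. -/
theorem stmt11 (n k : ℕ) (hn : 2 ≤ n) (hk1 : 1 ≤ k) (hkn : k ≤ n)
    (p : Fin n → ℝ) (hp : ∀ j, 0 < p j)
    (z : Fin n → ℂ) (hz : z ∈ ellipsoid p) (hmon : monIncr p z k)
    (hznz : ∀ j : Fin n, (j : ℕ) < dd p z k → z j ≠ 0)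
    (hdn : dd p z k < n)
    (hp' : ∀ j : Fin n, dd p z k ≤ (j : ℕ) → (1 : ℝ) / 2 ≤ p j) :
    ∃ h : (Fin (n - dd p z k) → ℂ) → ℂ,
      DifferentiableOn ℂ h (ellipsoid (pshift p (dd p z k))) ∧
      (∃ ζ ∈ ellipsoid (pshift p (dd p z k)), h ζ ≠ 0) ∧
      (∀ ζ ∈ ellipsoid (pshift p (dd p z k)),
        (∏ j ∈ univ.filter (fun j : Fin (n - dd p z k) => dd p z k + (j : ℕ) < k), ζ j) = 0 →
          h ζ = 0) ∧
      (∀ ζ ∈ ellipsoid (pshift p (dd p z k)),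
        ‖h ζ‖ * rrest p (dd p z k) ζ ^ qq p (dd p z k) ≤
          ‖h (zrest z (dd p z k))‖ *
            rrest p (dd p z k) (zrest z (dd p z k)) ^ qq p (dd p z k)) :=
  stmt11_general n k p hp z hz hmon hp'
end

section
/- (Proposition d, concrete form.) Let p_1, p_2 > 0 and assume p_2 ≥ 1/2 or 8p_1 + 4p_2(1 − p_2) > 1. Let t_0 ∈ (0,1) satisfy t_0^{2p_2} > p_1/(p_1 + p_2). Then there exists a holomorphic function h : 𝔻 → ℂ, h ≢ 0, with h(0) = 0, such that the function ζ ↦ |h(ζ)| · (1 − |ζ|^{2p_2})^{1/(2p_1)} attains its maximum over 𝔻 at the point t_0. -/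
/-!
Take `h(ζ) = ζ e^{sζ}` with `s > 0`. Since `|h(ζ)| ≤ |ζ| e^{s|ζ|}`, with equality on the positive
axis, it suffices to maximize the radial profile `r e^{sr} (1 - r^c)^{1/a}` (`a = 2p₁`, `c = 2p₂`)
over `[0, 1)`. Its logarithm is concave on `(0, 1)`: its second derivative is
`-q(r^c) / (a r² (1 - r^c)²)` with `q(x) = a(1-x)² + cx² + c(c-1)x`, and the hypothesis on
`p₁, p₂` makes `q` positive on `(0, 1)`. Choosing `s` so that the derivative of the logarithm
vanishes at `t₀` makes `t₀` the maximum, and `t₀^c > a/(a+c)` says exactly that this `s` is positive.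
-/

open Real Set

lemma ConcaveOn.isMaxOn_of_hasDerivAt_eq_zero {S : Set ℝ} {f : ℝ → ℝ} {x : ℝ}
    (hf : ConcaveOn ℝ S f) (hx : x ∈ interior S) (hfx : HasDerivAt f 0 x) : IsMaxOn f S x := by
  have hmin : IsMinOn (-f) S x := hf.neg.isMinOn_of_rightDeriv_eq_zero hx <| by
    simpa using hfx.neg.hasDerivWithinAt.derivWithin (uniqueDiffWithinAt_Ioi x)
  exact isMaxOn_iff.2 fun y hy => neg_le_neg_iff.1 (isMinOn_iff.1 hmin y hy)

lemma quadratic_pos_of_mem_Ioo {a c x : ℝ} (ha : 0 < a) (hc : 0 < c)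
    (hac : 1 ≤ c ∨ (1 - c) ^ 2 < 4 * a) (hx : x ∈ Ioo 0 1) :
    0 < a * (1 - x) ^ 2 + c * x ^ 2 + c * (c - 1) * x := by
  obtain ⟨hx0, hx1⟩ := hx
  rcases hac with h | h
  · have : 0 ≤ c * (c - 1) * x := by have := sub_nonneg.2 h; positivity
    nlinarith [mul_pos hc (pow_pos hx0 2)]
  · -- the discriminant of the quadratic in `x` is `c² ((1 - c)² - 4a) < 0`
    nlinarith [sq_nonneg (2 * (a + c) * x - (2 * a + c * (1 - c))),
      mul_pos (mul_pos hc hc) (sub_pos.2 h)]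

lemma norm_mul_cexp_le {s : ℝ} (hs : 0 ≤ s) (ζ : ℂ) :
    ‖ζ * Complex.exp (s * ζ)‖ ≤ ‖ζ‖ * exp (s * ‖ζ‖) := by
  rw [norm_mul, Complex.norm_exp, Complex.re_ofReal_mul]
  gcongr
  exact Complex.re_le_norm ζ

lemma norm_ofReal_mul_cexp {s t : ℝ} (ht : 0 ≤ t) :
    ‖(t : ℂ) * Complex.exp (s * t)‖ = t * exp (s * t) := by
  rw [norm_mul, Complex.norm_exp, Complex.norm_of_nonneg ht, ← Complex.ofReal_mul,
    Complex.ofReal_re]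

noncomputable def logProfile (a c s r : ℝ) : ℝ := log r + s * r + a⁻¹ * log (1 - r ^ c)

/-- The slope `s` for which `t` is a critical point of `logProfile a c s`. -/
noncomputable def criticalSlope (a c t : ℝ) : ℝ := c / a * t ^ (c - 1) / (1 - t ^ c) - t⁻¹

section LogProfile

variable {a c r : ℝ}

lemma one_sub_rpow_pos_s13 (hc : 0 < c) (hr : r ∈ Ioo 0 1) : 0 < 1 - r ^ c :=
  sub_pos.2 (rpow_lt_one hr.1.le hr.2 hc)

lemma exp_logProfile (s : ℝ) (hc : 0 < c) (hr : r ∈ Ioo 0 1) :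
    exp (logProfile a c s r) = r * exp (s * r) * (1 - r ^ c) ^ a⁻¹ := by
  rw [logProfile, exp_add, exp_add, exp_log hr.1, rpow_def_of_pos (one_sub_rpow_pos_s13 hc hr),
    mul_comm a⁻¹]

lemma hasDerivAt_logProfile (s : ℝ) (hc : 0 < c) (hr : r ∈ Ioo 0 1) :
    HasDerivAt (logProfile a c s) (r⁻¹ + s - c / a * r ^ (c - 1) / (1 - r ^ c)) r := by
  have hrc : HasDerivAt (fun r : ℝ => 1 - r ^ c) (-(c * r ^ (c - 1))) r := by
    simpa using (hasDerivAt_rpow_const (p := c) (Or.inl hr.1.ne')).const_sub 1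
  refine (((hasDerivAt_log hr.1.ne').add ((hasDerivAt_id r).const_mul s)).add
    ((hrc.log (one_sub_rpow_pos_s13 hc hr).ne').const_mul a⁻¹)).congr_deriv ?_
  ring

lemma hasDerivAt_logProfile_deriv (s : ℝ) (ha : a ≠ 0) (hc : 0 < c) (hr : r ∈ Ioo 0 1) :
    HasDerivAt (fun r => r⁻¹ + s - c / a * r ^ (c - 1) / (1 - r ^ c))
      (-((a * (1 - r ^ c) ^ 2 + c * (r ^ c) ^ 2 + c * (c - 1) * r ^ c) /
        (a * r ^ 2 * (1 - r ^ c) ^ 2))) r := by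
  have hr0 := hr.1.ne'
  have hrc : HasDerivAt (fun r : ℝ => 1 - r ^ c) (-(c * r ^ (c - 1))) r := by
    simpa using (hasDerivAt_rpow_const (p := c) (Or.inl hr0)).const_sub 1
  refine (((hasDerivAt_inv hr0).add_const s).sub
    (((hasDerivAt_rpow_const (p := c - 1) (Or.inl hr0)).const_mul (c / a)).div hrc
      (one_sub_rpow_pos_s13 hc hr).ne')).congr_deriv ?_
  have hden := (one_sub_rpow_pos_s13 hc hr).ne'
  simp only [rpow_sub_one hr0]
  field_simp
  ring

lemma concaveOn_logProfile (s : ℝ) (ha : 0 < a) (hc : 0 < c)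
    (hac : 1 ≤ c ∨ (1 - c) ^ 2 < 4 * a) : ConcaveOn ℝ (Ioo 0 1) (logProfile a c s) := by
  refine concaveOn_of_hasDerivWithinAt2_nonpos (convex_Ioo 0 1)
    (fun r hr => (hasDerivAt_logProfile s hc hr).continuousAt.continuousWithinAt)
    (fun r hr => (hasDerivAt_logProfile s hc (interior_subset hr)).hasDerivWithinAt)
    (fun r hr => (hasDerivAt_logProfile_deriv s ha.ne' hc (interior_subset hr)).hasDerivWithinAt)
    fun r hr => ?_
  rw [interior_Ioo] at hr
  have hx : r ^ c ∈ Ioo (0 : ℝ) 1 := ⟨rpow_pos_of_pos hr.1 c, sub_pos.1 (one_sub_rpow_pos_s13 hc hr)⟩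
  have hq := quadratic_pos_of_mem_Ioo ha hc hac hx
  have hden := one_sub_rpow_pos_s13 hc hr
  exact neg_nonpos.2 (div_pos hq (by have := hr.1; positivity)).le

lemma isMaxOn_logProfile_criticalSlope {t : ℝ} (ha : 0 < a) (hc : 0 < c)
    (hac : 1 ≤ c ∨ (1 - c) ^ 2 < 4 * a) (ht : t ∈ Ioo 0 1) :
    IsMaxOn (logProfile a c (criticalSlope a c t)) (Ioo 0 1) t := by
  refine (concaveOn_logProfile _ ha hc hac).isMaxOn_of_hasDerivAt_eq_zero
    (by rwa [interior_Ioo]) ((hasDerivAt_logProfile _ hc ht).congr_deriv ?_)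
  rw [criticalSlope]
  ring

lemma criticalSlope_pos {t : ℝ} (ha : 0 < a) (hc : 0 < c) (ht : t ∈ Ioo 0 1)
    (hat : a / (a + c) < t ^ c) : 0 < criticalSlope a c t := by
  have hden := one_sub_rpow_pos_s13 hc ht
  have hslope : criticalSlope a c t = ((a + c) * t ^ c - a) / (a * t * (1 - t ^ c)) := by
    rw [criticalSlope, rpow_sub ht.1, rpow_one]
    field_simp
    ring
  have hat' := (div_lt_iff₀ (by positivity)).1 hat
  rw [hslope]
  exact div_pos (by linarith) (mul_pos (mul_pos ha ht.1) hden)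

lemma mul_exp_mul_rpow_le_of_criticalSlope {t : ℝ} (ha : 0 < a) (hc : 0 < c)
    (hac : 1 ≤ c ∨ (1 - c) ^ 2 < 4 * a) (ht : t ∈ Ioo 0 1) (hr : r ∈ Ico 0 1) :
    r * exp (criticalSlope a c t * r) * (1 - r ^ c) ^ a⁻¹ ≤
      t * exp (criticalSlope a c t * t) * (1 - t ^ c) ^ a⁻¹ := by
  rw [← exp_logProfile _ hc ht]
  rcases hr.1.eq_or_lt with rfl | hr0
  · rw [zero_mul, zero_mul]
    exact (exp_pos _).le
  · rw [← exp_logProfile _ hc ⟨hr0, hr.2⟩]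
    exact exp_le_exp.2 (isMaxOn_iff.1 (isMaxOn_logProfile_criticalSlope ha hc hac ht) r ⟨hr0, hr.2⟩)

end LogProfile

/-- Proposition d, concrete form: under the stated conditions on `p₁, p₂` there is a
holomorphic `h ≢ 0` on `𝔻` with `h(0) = 0` such that `|h(ζ)|(1-|ζ|^{2p₂})^{1/(2p₁)}`
attains its maximum over `𝔻` at `t₀`. -/
theorem stmt13 (p₁ p₂ : ℝ) (hp1 : 0 < p₁) (hp2 : 0 < p₂)
    (hcond : (1 : ℝ) / 2 ≤ p₂ ∨ 8 * p₁ + 4 * p₂ * (1 - p₂) > 1)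
    (t₀ : ℝ) (ht₀ : t₀ ∈ Set.Ioo (0 : ℝ) 1) (ht : p₁ / (p₁ + p₂) < t₀ ^ (2 * p₂)) :
    ∃ h : ℂ → ℂ, DifferentiableOn ℂ h (Metric.ball 0 1) ∧
      (∃ ζ ∈ Metric.ball (0 : ℂ) 1, h ζ ≠ 0) ∧ h 0 = 0 ∧
      ∀ ζ ∈ Metric.ball (0 : ℂ) 1,
        ‖h ζ‖ * (1 - ‖ζ‖ ^ (2 * p₂)) ^ (2 * p₁)⁻¹ ≤
          ‖h (t₀ : ℂ)‖ * (1 - t₀ ^ (2 * p₂)) ^ (2 * p₁)⁻¹ := by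
  have ha : 0 < 2 * p₁ := by positivity
  have hc : 0 < 2 * p₂ := by positivity
  have hac : 1 ≤ 2 * p₂ ∨ (1 - 2 * p₂) ^ 2 < 4 * (2 * p₁) :=
    hcond.imp (fun h => by linarith) (fun h => by nlinarith)
  set s := criticalSlope (2 * p₁) (2 * p₂) t₀
  have hs : 0 < s := criticalSlope_pos ha hc ht₀ <| by
    rwa [← mul_add, mul_div_mul_left _ _ two_ne_zero]
  refine ⟨fun ζ => ζ * Complex.exp (s * ζ), by fun_prop, ⟨t₀, ?_, ?_⟩, by simp, fun ζ hζ => ?_⟩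
  · simpa [abs_of_pos ht₀.1] using ht₀.2
  · simp [ht₀.1.ne', Complex.exp_ne_zero]
  rw [mem_ball_zero_iff] at hζ
  have hρ : 0 ≤ (1 - ‖ζ‖ ^ (2 * p₂)) ^ (2 * p₁)⁻¹ :=
    rpow_nonneg (sub_nonneg.2 (rpow_le_one (norm_nonneg ζ) hζ.le hc.le)) _
  calc ‖ζ * Complex.exp (s * ζ)‖ * (1 - ‖ζ‖ ^ (2 * p₂)) ^ (2 * p₁)⁻¹
      ≤ ‖ζ‖ * exp (s * ‖ζ‖) * (1 - ‖ζ‖ ^ (2 * p₂)) ^ (2 * p₁)⁻¹ := by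
        gcongr
        exact norm_mul_cexp_le hs.le ζ
    _ ≤ t₀ * exp (s * t₀) * (1 - t₀ ^ (2 * p₂)) ^ (2 * p₁)⁻¹ :=
        mul_exp_mul_rpow_le_of_criticalSlope ha hc hac ht₀ ⟨norm_nonneg ζ, hζ⟩
    _ = ‖(t₀ : ℂ) * Complex.exp (s * t₀)‖ * (1 - t₀ ^ (2 * p₂)) ^ (2 * p₁)⁻¹ := by
        rw [norm_ofReal_mul_cexp ht₀.1.le]
end

section
/- (Lemma neg1.) Let p ∈ (0,1), q > 0, and define φ(t) := (1 − t^p)^{−q} for t ∈ [0,1). Assume there exist 0 < c < b < 1 such that φ is strictly concave on [0,b] and φ(0) + (b/c)(φ(c) − φ(0)) > φ(b) + 2. Let f : 𝔻 → ℂ be holomorphic, f ≢ 0, and suppose that the function ζ ↦ |f(ζ)|/φ(|ζ|) attains its maximum over 𝔻 at a point w_0. Then w_0 = 0 or |w_0| ≥ c. -/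
/-!
Suppose `0 < r := |w₀| < c` and let `Λ > 0` be the maximum of `|f(ζ)|/φ(|ζ|)`. Then
`|f| ≤ Λ φ(b)` on the circle `|ζ| = b`, hence on the disc by the maximum modulus principle,
and the Schwarz lemma applied to `f - f(0)` there, together with `|f(0)| ≤ Λ φ(0) = Λ`,
gives `φ(r) ≤ 1 + r (φ(b) + 1) / b`.
Concavity of `φ` puts the chord through `(0, φ 0)` and `(c, φ c)` below the graph on `[0, c]`,
so `φ(r) ≥ 1 + r (φ(c) - 1) / c`, and the gap hypothesis says exactly that the second slope
exceeds the first.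
-/

open Metric Set

theorem Complex.dist_le_div_mul_dist_of_forall_mem_sphere_norm_le {E : Type*}
    [NormedAddCommGroup E] [NormedSpace ℂ E] {f : ℂ → E} {c z : ℂ} {R M : ℝ} (hR : 0 < R)
    (hf : DiffContOnCl ℂ f (ball c R)) (hM : ∀ w ∈ sphere c R, ‖f w‖ ≤ M)
    (hz : z ∈ ball c R) : dist (f z) (f c) ≤ (M + ‖f c‖) / R * dist z c := by
  have hbound : ∀ w ∈ ball c R, ‖f w‖ ≤ M := fun w hw ↦
    norm_le_of_forall_mem_frontier_norm_le isBounded_ball hf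
      (by rwa [frontier_ball c hR.ne']) (subset_closure hw)
  refine dist_le_div_mul_dist_of_mapsTo_ball hf.differentiableOn (fun w hw ↦ ?_) hz
  rw [mem_closedBall]
  exact (dist_le_norm_add_norm _ _).trans (by linarith [hbound w hw])

theorem weight_le_of_isMaxOn_norm_div {ω : ℝ → ℝ} (hω : ∀ t, 0 ≤ t → t < 1 → 0 < ω t)
    {f : ℂ → ℂ} (hf : DifferentiableOn ℂ f (ball 0 1)) (hf0 : ∃ ζ ∈ ball (0 : ℂ) 1, f ζ ≠ 0)
    {w₀ : ℂ} (hmax : IsMaxOn (fun ζ ↦ ‖f ζ‖ / ω ‖ζ‖) (ball 0 1) w₀)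
    {b : ℝ} (hb : b < 1) (hw₀b : ‖w₀‖ < b) :
    ω ‖w₀‖ ≤ ω 0 + (ω b + ω 0) / b * ‖w₀‖ := by
  have hb0 : 0 < b := (norm_nonneg w₀).trans_lt hw₀b
  have hωpos : ∀ ζ ∈ ball (0 : ℂ) 1, 0 < ω ‖ζ‖ := fun ζ hζ ↦
    hω _ (norm_nonneg ζ) (mem_ball_zero_iff.mp hζ)
  set Λ := ‖f w₀‖ / ω ‖w₀‖
  have hΛ : 0 < Λ := by
    obtain ⟨ζ, hζ, hfζ⟩ := hf0
    exact (div_pos (norm_pos_iff.mpr hfζ) (hωpos ζ hζ)).trans_le (isMaxOn_iff.mp hmax ζ hζ)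
  have hle : ∀ ζ ∈ ball (0 : ℂ) 1, ‖f ζ‖ ≤ Λ * ω ‖ζ‖ := fun ζ hζ ↦
    (div_le_iff₀ (hωpos ζ hζ)).mp (isMaxOn_iff.mp hmax ζ hζ)
  have hf_zero_le : ‖f 0‖ ≤ Λ * ω 0 := by simpa using hle 0 (mem_ball_self one_pos)
  have hfw₀ : ‖f w₀‖ = Λ * ω ‖w₀‖ :=
    (div_mul_cancel₀ _ (hω _ (norm_nonneg _) (hw₀b.trans hb)).ne').symm
  have hsub : closedBall (0 : ℂ) b ⊆ ball 0 1 := closedBall_subset_ball hb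
  have hsphere : ∀ w ∈ sphere (0 : ℂ) b, ‖f w‖ ≤ Λ * ω b := fun w hw ↦ by
    simpa [mem_sphere_zero_iff_norm.mp hw] using hle w (hsub (sphere_subset_closedBall hw))
  have hschwarz : ‖f w₀ - f 0‖ ≤ (Λ * ω b + ‖f 0‖) / b * ‖w₀‖ := by
    simpa [dist_eq_norm] using Complex.dist_le_div_mul_dist_of_forall_mem_sphere_norm_le hb0
      (hf.diffContOnCl_ball hsub) hsphere (mem_ball_zero_iff.mpr hw₀b)
  have hmul : Λ * ω ‖w₀‖ ≤ Λ * (ω 0 + (ω b + ω 0) / b * ‖w₀‖) :=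
    calc Λ * ω ‖w₀‖ = ‖f w₀‖ := hfw₀.symm
      _ ≤ ‖f 0‖ + ‖f w₀ - f 0‖ := norm_le_norm_add_norm_sub' _ _
      _ ≤ ‖f 0‖ + (Λ * ω b + ‖f 0‖) / b * ‖w₀‖ := by gcongr
      _ ≤ Λ * ω 0 + (Λ * ω b + Λ * ω 0) / b * ‖w₀‖ := by gcongr
      _ = Λ * (ω 0 + (ω b + ω 0) / b * ‖w₀‖) := by ring
  exact le_of_mul_le_mul_left hmul hΛ

theorem stmt14_general (p q : ℝ) (hp : p ∈ Set.Ioo (0 : ℝ) 1)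
    (φ : ℝ → ℝ) (hφ : φ = fun t => (1 - t ^ p) ^ (-q))
    (b c : ℝ) (hc : 0 < c) (hcb : c < b) (hb : b < 1)
    (hconc : StrictConcaveOn ℝ (Set.Icc 0 b) φ)
    (hineq : φ 0 + (b / c) * (φ c - φ 0) > φ b + 2)
    (f : ℂ → ℂ) (hf : DifferentiableOn ℂ f (Metric.ball 0 1))
    (hf0 : ∃ ζ ∈ Metric.ball (0 : ℂ) 1, f ζ ≠ 0)
    (w₀ : ℂ)
    (hmax : ∀ ζ ∈ Metric.ball (0 : ℂ) 1,
      ‖f ζ‖ / φ ‖ζ‖ ≤ ‖f w₀‖ / φ ‖w₀‖) :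
    w₀ = 0 ∨ c ≤ ‖w₀‖ := by
  by_contra! h
  obtain ⟨hw₀, hw₀c⟩ := h
  set r := ‖w₀‖
  have hr : 0 < r := norm_pos_iff.mpr hw₀
  have hφ0 : φ 0 = 1 := by simp [hφ, Real.zero_rpow hp.1.ne']
  have hφpos : ∀ t, 0 ≤ t → t < 1 → 0 < φ t := fun t ht ht1 ↦ by
    rw [hφ]
    exact Real.rpow_pos_of_pos (sub_pos.mpr (Real.rpow_lt_one ht ht1 hp.1)) _
  have hweight : φ r ≤ φ 0 + (φ b + φ 0) / b * r :=
    weight_le_of_isMaxOn_norm_div hφpos hf hf0 (isMaxOn_iff.mpr hmax) hb (hw₀c.trans hcb)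
  have hchord : (φ c - φ 0) / c ≤ (φ r - φ 0) / r := by
    simpa [slope_def_field] using hconc.concaveOn.antitoneOn_slope_gt
      (left_mem_Icc.mpr (hc.trans hcb).le) ⟨⟨hr.le, hw₀c.le.trans hcb.le⟩, hr⟩
      ⟨⟨hc.le, hcb.le⟩, hc⟩ hw₀c.le
  have hgap : (φ b + 1) / b < (φ c - 1) / c := by
    have h : φ b + 1 < b / c * (φ c - 1) := by rw [hφ0] at hineq; linarith
    rw [div_mul_eq_mul_div, lt_div_iff₀ hc] at h
    rw [div_lt_div_iff₀ (hc.trans hcb) hc]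
    linarith
  rw [hφ0] at hweight hchord
  have hchord_mul := (le_div_iff₀ hr).mp hchord
  have hgap_mul := mul_lt_mul_of_pos_right hgap hr
  linarith

/-- Lemma neg1: under a concavity and gap condition on `φ(t) = (1-t^p)^{-q}`,
any maximum point `w₀` of `|f(ζ)|/φ(|ζ|)` on `𝔻` satisfies `w₀ = 0` or `|w₀| ≥ c`. -/
theorem stmt14 (p q : ℝ) (hp : p ∈ Set.Ioo (0 : ℝ) 1) (hq : 0 < q)
    (φ : ℝ → ℝ) (hφ : φ = fun t => (1 - t ^ p) ^ (-q))
    (b c : ℝ) (hc : 0 < c) (hcb : c < b) (hb : b < 1)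
    (hconc : StrictConcaveOn ℝ (Set.Icc 0 b) φ)
    (hineq : φ 0 + (b / c) * (φ c - φ 0) > φ b + 2)
    (f : ℂ → ℂ) (hf : DifferentiableOn ℂ f (Metric.ball 0 1))
    (hf0 : ∃ ζ ∈ Metric.ball (0 : ℂ) 1, f ζ ≠ 0)
    (w₀ : ℂ) (hw₀ : w₀ ∈ Metric.ball (0 : ℂ) 1)
    (hmax : ∀ ζ ∈ Metric.ball (0 : ℂ) 1,
      ‖f ζ‖ / φ ‖ζ‖ ≤ ‖f w₀‖ / φ ‖w₀‖) :
    w₀ = 0 ∨ c ≤ ‖w₀‖ :=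
  stmt14_general p q hp φ hφ b c hc hcb hb hconc hineq f hf hf0 w₀ hmax
end

section
/- (Lemma neg2.) Let p ∈ (0,1) and q > 0, and define φ(t) := (1 − t^p)^{−q} for t ∈ [0,1). Then there exist b ∈ (0,1) and c ∈ (0,b) such that φ is strictly concave on [0,b] and φ(0) + (b/c)(φ(c) − φ(0)) > φ(b) + 2. -/
/-!
The second derivative of `φ` has the sign of `(p - 1) + (p q + 1) t ^ p`, so `φ` is strictly
concave up to its inflection point `b`, where `b ^ p = (1 - p) / (p q + 1)`. Near `0`,
`φ c - φ 0 ≥ q c ^ p` (from `exp x ≥ 1 + x` and `log (1 - s) ≤ -s`), so the secant slope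
from `0` is at least `q c ^ (p - 1)`, which blows up as `c → 0⁺` because `p < 1`.
-/

open Real Set Filter Topology

lemma hasDerivAt_one_sub_rpow_rpow (p a : ℝ) {x : ℝ} (hx : 0 < x) (hxp : x ^ p < 1) :
    HasDerivAt (fun t => (1 - t ^ p) ^ a)
      (-(a * p) * (x ^ (p - 1) * (1 - x ^ p) ^ (a - 1))) x := by
  have hinner : HasDerivAt (fun t => 1 - t ^ p) (-(p * x ^ (p - 1))) x :=
    (hasDerivAt_rpow_const (Or.inl hx.ne')).const_sub 1
  refine ((hasDerivAt_rpow_const (Or.inl (sub_pos.2 hxp).ne')).comp x hinner).congr_deriv ?_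
  ring

lemma one_add_mul_le_one_sub_rpow_neg {s q : ℝ} (hs : s < 1) (hq : 0 ≤ q) :
    1 + q * s ≤ (1 - s) ^ (-q) := by
  have hlog : log (1 - s) ≤ -s := by linarith [log_le_sub_one_of_pos (sub_pos.2 hs)]
  rw [rpow_def_of_pos (sub_pos.2 hs)]
  nlinarith [add_one_le_exp (log (1 - s) * -q)]

section

variable {p q : ℝ}

lemma hasDerivAt_deriv_one_sub_rpow_rpow_neg {x : ℝ} (hx : 0 < x) (hxp : x ^ p < 1) :
    HasDerivAt (fun t => q * p * (t ^ (p - 1) * (1 - t ^ p) ^ (-q - 1)))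
      (q * p * (x ^ (p - 2) * (1 - x ^ p) ^ (-q - 2)) * (p - 1 + (p * q + 1) * x ^ p)) x := by
  have hpow : HasDerivAt (fun t => t ^ (p - 1)) ((p - 1) * x ^ (p - 2)) x := by
    convert hasDerivAt_rpow_const (p := p - 1) (Or.inl hx.ne') using 3
    ring
  refine ((hpow.mul (hasDerivAt_one_sub_rpow_rpow p (-q - 1) hx hxp)).const_mul
    (q * p)).congr_deriv ?_
  have hsq : x ^ (p - 1) * x ^ (p - 1) = x ^ (p - 2) * x ^ p := by
    rw [← rpow_add hx, ← rpow_add hx]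
    ring_nf
  have hshift : (1 - x ^ p) ^ (-q - 1) = (1 - x ^ p) ^ (-q - 2) * (1 - x ^ p) := by
    rw [← rpow_add_one (sub_pos.2 hxp).ne']
    ring_nf
  rw [show -q - 1 - 1 = -q - 2 by ring, hshift]
  linear_combination (q * p * (q + 1) * p * (1 - x ^ p) ^ (-q - 2)) * hsq

lemma strictConcaveOn_one_sub_rpow_rpow_neg (hp : 0 < p) (hq : 0 < q) {b : ℝ}
    (hb : b ^ p ≤ (1 - p) / (p * q + 1)) :
    StrictConcaveOn ℝ (Icc 0 b) (fun t => (1 - t ^ p) ^ (-q)) := by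
  have hpq : 0 < p * q + 1 := by positivity
  have hb1 : b ^ p < 1 := hb.trans_lt ((div_lt_one hpq).2 (by nlinarith))
  apply strictConcaveOn_of_deriv2_neg (convex_Icc 0 b)
  · intro x hx
    have hxp : x ^ p < 1 := (rpow_le_rpow hx.1 hx.2 hp.le).trans_lt hb1
    exact ((continuousAt_const.sub (continuousAt_rpow_const x p (Or.inr hp.le))).rpow_const
      (Or.inl (sub_pos.2 hxp).ne')).continuousWithinAt
  · intro x hx
    rw [interior_Icc] at hx
    have hxb : x ^ p < b ^ p := rpow_lt_rpow hx.1.le hx.2 hp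
    have hxp : x ^ p < 1 := hxb.trans hb1
    have hderiv : deriv (fun t => (1 - t ^ p) ^ (-q)) =ᶠ[𝓝 x]
        fun t => q * p * (t ^ (p - 1) * (1 - t ^ p) ^ (-q - 1)) := by
      have hx1 : x < 1 := lt_of_not_ge fun h => hxp.not_ge (one_le_rpow h hp.le)
      filter_upwards [Ioo_mem_nhds hx.1 hx1] with t ht
      exact ((hasDerivAt_one_sub_rpow_rpow p (-q) ht.1 (rpow_lt_one ht.1.le ht.2 hp)).congr_deriv
        (by ring)).deriv
    rw [Function.iterate_succ_apply, Function.iterate_one, hderiv.deriv_eq,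
      (hasDerivAt_deriv_one_sub_rpow_rpow_neg hx.1 hxp).deriv]
    have hfactor : 0 < q * p * (x ^ (p - 2) * (1 - x ^ p) ^ (-q - 2)) :=
      mul_pos (by positivity)
        (mul_pos (rpow_pos_of_pos hx.1 _) (rpow_pos_of_pos (sub_pos.2 hxp) _))
    have hbpq : (p * q + 1) * b ^ p ≤ 1 - p := by rwa [le_div_iff₀' hpq] at hb
    exact mul_neg_of_pos_of_neg hfactor (by nlinarith)

lemma tendsto_div_mul_one_sub_rpow_rpow_neg_sub_one (hp : 0 < p) (hp1 : p < 1) (hq : 0 < q)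
    {b : ℝ} (hb : 0 < b) :
    Tendsto (fun c => b / c * ((1 - c ^ p) ^ (-q) - 1)) (𝓝[>] 0) atTop := by
  have hlower :
      ∀ᶠ c in 𝓝[>] 0, q * b * c ^ (p - 1) ≤ b / c * ((1 - c ^ p) ^ (-q) - 1) := by
    filter_upwards [Ioo_mem_nhdsGT one_pos] with c hc
    have hbernoulli := one_add_mul_le_one_sub_rpow_neg (rpow_lt_one hc.1.le hc.2 hp) hq.le
    calc q * b * c ^ (p - 1) = b / c * (q * c ^ p) := by rw [rpow_sub_one hc.1.ne']; ring
      _ ≤ b / c * ((1 - c ^ p) ^ (-q) - 1) :=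
        mul_le_mul_of_nonneg_left (by linarith) (div_pos hb hc.1).le
  exact tendsto_atTop_mono' _ hlower
    ((tendsto_rpow_neg_nhdsGT_zero (by linarith)).const_mul_atTop (by positivity))

end

/-- Lemma neg2: for `p ∈ (0,1)`, `q > 0`, and `φ(t) = (1-t^p)^{-q}`, there exist
`b ∈ (0,1)` and `c ∈ (0,b)` with `φ` strictly concave on `[0,b]` and
`φ(0) + (b/c)(φ(c) - φ(0)) > φ(b) + 2`. -/
theorem stmt15 (p q : ℝ) (hp : p ∈ Set.Ioo (0 : ℝ) 1) (hq : 0 < q)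
    (φ : ℝ → ℝ) (hφ : φ = fun t => (1 - t ^ p) ^ (-q)) :
    ∃ b c : ℝ, 0 < c ∧ c < b ∧ b < 1 ∧
      StrictConcaveOn ℝ (Set.Icc 0 b) φ ∧
      φ 0 + (b / c) * (φ c - φ 0) > φ b + 2 := by
  obtain ⟨hp0, hp1⟩ := hp
  subst hφ
  have hB : 0 < (1 - p) / (p * q + 1) := div_pos (by linarith) (by positivity)
  set b := ((1 - p) / (p * q + 1)) ^ p⁻¹
  have hbp : b ^ p = (1 - p) / (p * q + 1) := rpow_inv_rpow hB.le hp0.ne'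
  have hb0 : 0 < b := rpow_pos_of_pos hB _
  have hb1 : b < 1 :=
    rpow_lt_one hB.le ((div_lt_one (by positivity)).2 (by nlinarith)) (inv_pos.2 hp0)
  obtain ⟨c, hslope, hc⟩ :=
    (((tendsto_div_mul_one_sub_rpow_rpow_neg_sub_one hp0 hp1 hq hb0).eventually_gt_atTop
      ((1 - b ^ p) ^ (-q) + 1)).and (Ioo_mem_nhdsGT hb0)).exists
  refine ⟨b, c, hc.1, hc.2, hb1, strictConcaveOn_one_sub_rpow_rpow_neg hp0 hq hbp.le, ?_⟩
  simp only [zero_rpow hp0.ne', sub_zero, one_rpow] at hslope ⊢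
  linarith
end

section
/- (Lemma concave.) Let a, c > 0 and t_0 ∈ (0,1) be such that (c ≥ 1 or 4a + 2c > 1 + c²) and t_0^c > a/(a + c). Then there exist b > 0 and r ≥ 1 such that the function h : [0,1] → ℝ, h(t) := t^a · (r − t)^{−b} · (1 − t^c), attains its maximum over [0,1] at t_0. -/
/-!
Put `u = t ^ c`. On `(0, 1)` the logarithmic derivative of `h` is
`P t = a / t + b / (r - t) - c t ^ (c - 1) / (1 - t ^ c)`, and
`P' t = b / (r - t) ^ 2 - q u / (t ^ 2 (1 - u) ^ 2)` with `q u = (a + c) u ^ 2 + (c ^ 2 - c - 2a) u + a`.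
The condition on `a, c` makes `q` positive on `[0, 1]` (for `c < 1` it says that the discriminant
`c ^ 2 ((c - 1) ^ 2 - 4a)` is negative), so `q ≥ δ > 0` there. The choice
`b = (r - t₀) K` with `K = c t₀ ^ (c - 1) / (1 - t₀ ^ c) - a / t₀`, which is positive exactly because
`t₀ ^ c > a / (a + c)`, gives `P t₀ = 0`, and `b / (r - 1) ^ 2 ≤ δ` once `r` is large. Then `P' ≤ 0`,
so `P` changes sign from `+` to `-` at `t₀`, where `h` attains its maximum.
-/

open Real Set

noncomputable def profile (a b c r t : ℝ) : ℝ := t ^ a * (r - t) ^ (-b) * (1 - t ^ c)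

noncomputable def profileLogDeriv (a b c r t : ℝ) : ℝ :=
  a / t + b / (r - t) - c * t ^ (c - 1) / (1 - t ^ c)

def profileQuadratic (a c u : ℝ) : ℝ := (a + c) * u ^ 2 + (c ^ 2 - c - 2 * a) * u + a

theorem profileQuadratic_pos {a c u : ℝ} (ha : 0 < a) (hc : 0 < c)
    (hcond : 1 ≤ c ∨ 4 * a + 2 * c > 1 + c ^ 2) (hu : u ∈ Icc (0 : ℝ) 1) :
    0 < profileQuadratic a c u := by
  obtain ⟨hu0, hu1⟩ := hu
  rcases hcond with hc1 | hdisc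
  · have hmid : 0 ≤ c * (c - 1) * u * (1 - u) := by
      have := sub_nonneg.2 hc1; have := sub_nonneg.2 hu1; positivity
    have hends : 0 < a * (1 - u) ^ 2 + c ^ 2 * u ^ 2 := by
      rcases hu0.eq_or_lt with rfl | hu0
      · simpa using ha
      · positivity
    have hsplit : profileQuadratic a c u =
        a * (1 - u) ^ 2 + c * (c - 1) * u * (1 - u) + c ^ 2 * u ^ 2 := by
      unfold profileQuadratic; ring
    linarith
  · unfold profileQuadratic
    nlinarith [sq_nonneg (2 * (a + c) * u + (c ^ 2 - c - 2 * a)), pow_pos hc 2]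

theorem exists_pos_le_profileQuadratic {a c : ℝ} (ha : 0 < a) (hc : 0 < c)
    (hcond : 1 ≤ c ∨ 4 * a + 2 * c > 1 + c ^ 2) :
    ∃ δ > 0, ∀ u ∈ Icc (0 : ℝ) 1, δ ≤ profileQuadratic a c u := by
  obtain ⟨u₀, hu₀, hmin⟩ := isCompact_Icc.exists_isMinOn (nonempty_Icc.2 zero_le_one)
    (by unfold profileQuadratic; fun_prop : Continuous (profileQuadratic a c)).continuousOn
  exact ⟨_, profileQuadratic_pos ha hc hcond hu₀, fun u hu => isMinOn_iff.1 hmin u hu⟩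

theorem continuousAt_profile {a b c r t : ℝ} (ha : 0 < a) (hc : 0 < c) (hrt : t < r) :
    ContinuousAt (profile a b c r) t := by
  have h1 : ContinuousAt (fun t : ℝ => t ^ a) t := continuousAt_rpow_const _ _ (Or.inr ha.le)
  have h2 : ContinuousAt (fun t : ℝ => (r - t) ^ (-b)) t :=
    (continuousAt_const.sub continuousAt_id).rpow_const (Or.inl (sub_ne_zero.2 hrt.ne'))
  have h3 : ContinuousAt (fun t : ℝ => t ^ c) t := continuousAt_rpow_const _ _ (Or.inr hc.le)
  exact (h1.mul h2).mul (continuousAt_const.sub h3)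

theorem hasDerivAt_profile {a b c r t : ℝ} (hc : 0 < c) (hr : 1 ≤ r) (ht : t ∈ Ioo (0 : ℝ) 1) :
    HasDerivAt (profile a b c r) (profile a b c r t * profileLogDeriv a b c r t) t := by
  obtain ⟨ht0, ht1⟩ := ht
  have hrt : 0 < r - t := by linarith
  have hu : 0 < 1 - t ^ c := sub_pos.2 (rpow_lt_one ht0.le ht1 hc)
  have h1 : HasDerivAt (fun t : ℝ => t ^ a) (a * t ^ (a - 1)) t :=
    hasDerivAt_rpow_const (Or.inl ht0.ne')
  have h2 : HasDerivAt (fun t : ℝ => (r - t) ^ (-b)) (-1 * -b * (r - t) ^ (-b - 1)) t := by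
    simpa using ((hasDerivAt_id t).const_sub r).rpow_const (p := -b) (Or.inl hrt.ne')
  have h3 : HasDerivAt (fun t : ℝ => 1 - t ^ c) (-(c * t ^ (c - 1))) t :=
    (hasDerivAt_rpow_const (Or.inl ht0.ne')).const_sub 1
  refine ((h1.mul h2).mul h3).congr_deriv ?_
  simp only [profile, profileLogDeriv, Pi.mul_apply, rpow_sub_one ht0.ne', rpow_sub_one hrt.ne']
  field_simp
  ring

theorem hasDerivAt_profileLogDeriv {a b c r t : ℝ} (hc : 0 < c) (hr : 1 ≤ r)
    (ht : t ∈ Ioo (0 : ℝ) 1) :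
    HasDerivAt (profileLogDeriv a b c r)
      (b / (r - t) ^ 2 - profileQuadratic a c (t ^ c) / (t ^ 2 * (1 - t ^ c) ^ 2)) t := by
  obtain ⟨ht0, ht1⟩ := ht
  have hrt : 0 < r - t := by linarith
  have hu : 0 < 1 - t ^ c := sub_pos.2 (rpow_lt_one ht0.le ht1 hc)
  have h1 : HasDerivAt (fun t : ℝ => a / t) (-(a / t ^ 2)) t := by
    simpa [div_eq_mul_inv] using (hasDerivAt_inv ht0.ne').const_mul a
  have h2 : HasDerivAt (fun t : ℝ => b / (r - t)) (b / (r - t) ^ 2) t := by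
    simpa [div_eq_mul_inv] using (((hasDerivAt_id t).const_sub r).inv hrt.ne').const_mul b
  have h3 : HasDerivAt (fun t : ℝ => c * t ^ (c - 1)) (c * ((c - 1) * t ^ (c - 1 - 1))) t :=
    (hasDerivAt_rpow_const (Or.inl ht0.ne')).const_mul c
  have h4 : HasDerivAt (fun t : ℝ => 1 - t ^ c) (-(c * t ^ (c - 1))) t :=
    (hasDerivAt_rpow_const (Or.inl ht0.ne')).const_sub 1
  refine ((h1.add h2).sub (h3.div h4 hu.ne')).congr_deriv ?_
  simp only [profileQuadratic, rpow_sub_one ht0.ne']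
  field_simp
  ring

theorem antitoneOn_profileLogDeriv {a b c r : ℝ} (hc : 0 < c) (hb : 0 ≤ b) (hr : 1 < r)
    (hq : ∀ u ∈ Icc (0 : ℝ) 1, b / (r - 1) ^ 2 ≤ profileQuadratic a c u) :
    AntitoneOn (profileLogDeriv a b c r) (Ioo 0 1) := by
  have hderiv := fun t (ht : t ∈ Ioo (0 : ℝ) 1) =>
    hasDerivAt_profileLogDeriv (a := a) (b := b) hc hr.le ht
  refine antitoneOn_of_deriv_nonpos (convex_Ioo 0 1)
    (fun t ht => (hderiv t ht).continuousAt.continuousWithinAt)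
    (fun t ht => (hderiv t (interior_subset ht)).differentiableAt.differentiableWithinAt)
    fun t ht => ?_
  rw [interior_Ioo] at ht
  obtain ⟨ht0, ht1⟩ := ht
  have hu0 : 0 < t ^ c := rpow_pos_of_pos ht0 c
  have hu1 : t ^ c < 1 := rpow_lt_one ht0.le ht1 hc
  have hq' := hq (t ^ c) ⟨hu0.le, hu1.le⟩
  rw [(hderiv t ⟨ht0, ht1⟩).deriv, sub_nonpos]
  calc b / (r - t) ^ 2 ≤ b / (r - 1) ^ 2 := by gcongr
    _ ≤ profileQuadratic a c (t ^ c) := hq'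
    _ ≤ profileQuadratic a c (t ^ c) / (t ^ 2 * (1 - t ^ c) ^ 2) := by
        refine le_div_self ((div_nonneg hb (sq_nonneg _)).trans hq') (by positivity) ?_
        have h1 : t ^ 2 ≤ 1 := pow_le_one₀ ht0.le ht1.le
        have h2 : (1 - t ^ c) ^ 2 ≤ 1 := pow_le_one₀ (by linarith) (by linarith)
        exact mul_le_one₀ h1 (by positivity) h2

theorem profile_pos {a b c r t : ℝ} (hc : 0 < c) (hr : 1 ≤ r) (ht : t ∈ Ioo (0 : ℝ) 1) :
    0 < profile a b c r t := by
  obtain ⟨ht0, ht1⟩ := ht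
  have hrt : 0 < r - t := by linarith
  have hu : 0 < 1 - t ^ c := sub_pos.2 (rpow_lt_one ht0.le ht1 hc)
  unfold profile
  positivity

theorem isMaxOn_profile {a b c r t₀ : ℝ} (ha : 0 < a) (hc : 0 < c) (hr : 1 < r)
    (ht₀ : t₀ ∈ Ioo (0 : ℝ) 1) (hanti : AntitoneOn (profileLogDeriv a b c r) (Ioo 0 1))
    (hzero : profileLogDeriv a b c r t₀ = 0) :
    IsMaxOn (profile a b c r) (Icc 0 1) t₀ := by
  obtain ⟨ht0, ht1⟩ := ht₀
  have hderiv := fun t (ht : t ∈ Ioo (0 : ℝ) 1) => hasDerivAt_profile (a := a) (b := b) hc hr.le ht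
  have hpos := fun t (ht : t ∈ Ioo (0 : ℝ) 1) => profile_pos (a := a) (b := b) hc hr.le ht
  have hcont : ∀ t ≤ 1, ContinuousAt (profile a b c r) t := fun t ht =>
    continuousAt_profile ha hc (by linarith)
  have hleft : Ioo 0 t₀ ⊆ Ioo 0 1 := Ioo_subset_Ioo_right ht1.le
  have hright : Ioo t₀ 1 ⊆ Ioo 0 1 := Ioo_subset_Ioo_left ht0.le
  refine isMaxOn_Icc_of_deriv (hcont 0 zero_le_one) (hcont t₀ ht1.le) (hcont 1 le_rfl)
    (fun t ht => (hderiv t (hleft ht)).differentiableAt.differentiableWithinAt)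
    (fun t ht => (hderiv t (hright ht)).differentiableAt.differentiableWithinAt)
    (fun t ht => ?_) (fun t ht => ?_)
  · rw [(hderiv t (hleft ht)).deriv]
    have := hanti (hleft ht) ⟨ht0, ht1⟩ ht.2.le
    exact mul_nonneg (hpos t (hleft ht)).le (hzero ▸ this)
  · rw [(hderiv t (hright ht)).deriv]
    have := hanti ⟨ht0, ht1⟩ (hright ht) ht.1.le
    exact mul_nonpos_of_nonneg_of_nonpos (hpos t (hright ht)).le (hzero ▸ this)

theorem div_lt_mul_rpow_sub_one_div_one_sub_rpow {a c t : ℝ} (ha : 0 < a) (hc : 0 < c)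
    (ht : t ∈ Ioo (0 : ℝ) 1) (htc : a / (a + c) < t ^ c) :
    a / t < c * t ^ (c - 1) / (1 - t ^ c) := by
  obtain ⟨ht0, ht1⟩ := ht
  have hu : 0 < 1 - t ^ c := sub_pos.2 (rpow_lt_one ht0.le ht1 hc)
  have h : a < (a + c) * t ^ c := (div_lt_iff₀' (by positivity)).1 htc
  rw [rpow_sub_one ht0.ne', mul_div_assoc', div_div, div_lt_div_iff₀ ht0 (by positivity)]
  nlinarith

theorem exists_one_lt_sub_mul_div_sq_le {K δ t₀ : ℝ} (hK : 0 ≤ K) (hδ : 0 < δ) (ht₀ : 0 ≤ t₀) :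
    ∃ r, 1 < r ∧ (r - t₀) * K / (r - 1) ^ 2 ≤ δ := by
  set s := 1 + 2 * K / δ
  have hs : 1 ≤ s := le_add_of_nonneg_right (by positivity)
  have hδs : 2 * K ≤ δ * s := by
    simp only [s]; rw [mul_add, mul_div_cancel₀ _ hδ.ne']; linarith
  refine ⟨s + 1, by linarith, ?_⟩
  rw [add_sub_cancel_right, div_le_iff₀ (by positivity)]
  nlinarith

/-- Lemma concave: if `a, c > 0`, `c ≥ 1` or `4a + 2c > 1 + c²`, and
`t₀ ∈ (0,1)` with `t₀^c > a/(a+c)`, then there are `b > 0`, `r ≥ 1` such that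
`h(t) = t^a (r-t)^{-b} (1-t^c)` attains its maximum over `[0,1]` at `t₀`. -/
theorem stmt16 (a c t₀ : ℝ) (ha : 0 < a) (hc : 0 < c)
    (hcond : 1 ≤ c ∨ 4 * a + 2 * c > 1 + c ^ 2)
    (ht₀ : t₀ ∈ Set.Ioo (0 : ℝ) 1) (ht : a / (a + c) < t₀ ^ c) :
    ∃ b r : ℝ, 0 < b ∧ 1 ≤ r ∧
      ∀ t ∈ Set.Icc (0 : ℝ) 1,
        t ^ a * (r - t) ^ (-b) * (1 - t ^ c) ≤
          t₀ ^ a * (r - t₀) ^ (-b) * (1 - t₀ ^ c) := by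
  set K := c * t₀ ^ (c - 1) / (1 - t₀ ^ c) - a / t₀ with hK_def
  have hK : 0 < K := sub_pos.2 (div_lt_mul_rpow_sub_one_div_one_sub_rpow ha hc ht₀ ht)
  obtain ⟨δ, hδ, hq⟩ := exists_pos_le_profileQuadratic ha hc hcond
  obtain ⟨r, hr, hrδ⟩ := exists_one_lt_sub_mul_div_sq_le hK.le hδ ht₀.1.le
  have hrt₀ : 0 < r - t₀ := by linarith [ht₀.2]
  have hb : 0 < (r - t₀) * K := mul_pos hrt₀ hK
  have hanti := antitoneOn_profileLogDeriv (a := a) hc hb.le hr fun u hu => hrδ.trans (hq u hu)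
  have hzero : profileLogDeriv a ((r - t₀) * K) c r t₀ = 0 := by
    rw [profileLogDeriv, mul_div_cancel_left₀ K hrt₀.ne', hK_def]
    ring
  exact ⟨_, r, hb, hr.le, isMaxOn_iff.1 (isMaxOn_profile ha hc hr ht₀ hanti hzero)⟩
end

section
/- Let a, c > 0 satisfy c ≥ 1 or 4a + 2c > 1 + c². Then for every u with a/(a + c) < u ≤ 1, one has −(a + c)u² + (2a + c − c²)u − a < 0. -/
/-- The key negativity claim in the proof of Lemma concave: if `a, c > 0` and
`c ≥ 1` or `4a + 2c > 1 + c²`, then `-(a+c)u² + (2a+c-c²)u - a < 0` for all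
`u ∈ (a/(a+c), 1]`. -/
theorem stmt17 (a c : ℝ) (ha : 0 < a) (hc : 0 < c)
    (hcond : 1 ≤ c ∨ 4 * a + 2 * c > 1 + c ^ 2) :
    ∀ u : ℝ, a / (a + c) < u → u ≤ 1 →
      -(a + c) * u ^ 2 + (2 * a + c - c ^ 2) * u - a < 0 := by
  intro u hu hu1
  have hac : 0 < a + c := by linarith
  have hx : a < (a + c) * u := by
    rwa [div_lt_iff₀ hac, mul_comm] at hu
  rcases hcond with h | h
  · -- vertex left of interval; value at x = a is ac² > 0
    have h1 : 0 ≤ (a + c) * u + a - (2 * a + c - c ^ 2) := by nlinarith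
    nlinarith [mul_nonneg (le_of_lt (sub_pos.mpr hx)) h1, mul_pos ha (mul_pos hc hc)]
  · -- negative discriminant
    nlinarith [sq_nonneg (2 * (a + c) * u - (2 * a + c - c ^ 2)),
      mul_pos (mul_pos hc hc) (show (0:ℝ) < 4 * a + 2 * c - 1 - c ^ 2 by linarith)]
end
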